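/- arXiv:2605.05180 — 13 statements merged into one kernel-verified Lean document; each statement's English description precedes it below -/
import Mathlib

section
/- With the symmetric orthogonal polynomial recurrence, Δ_2(x) := P_2(x)^2 - P_3(x)·P_1(x) satisfies a_1^2·a_2·Δ_2(x) = ((a_1 - a_2)·x^2 + c_1^2·a_2)·(1 - x^2) for all real x. -/
/-- With the symmetric orthogonal polynomial recurrence,
`a_1^2 a_2 Δ_2(x) = ((a_1 - a_2) x^2 + c_1^2 a_2) (1 - x^2)`. -/
theorem turan_delta_two
    (c : ℕ → ℝ) (hc0 : c 0 = 0) (hc : ∀ n, 1 ≤ n → c n ∈ Set.Ioo (0 : ℝ) 1)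
    (P : ℕ → ℝ → ℝ) (hP0 : ∀ x, P 0 x = 1)
    (hrec : ∀ n x, x * P n x = (1 - c n) * P (n + 1) x + c n * P (n - 1) x) :
    ∀ x : ℝ, (1 - c 1) ^ 2 * (1 - c 2) * (P 2 x ^ 2 - P 3 x * P 1 x) =
      (((1 - c 1) - (1 - c 2)) * x ^ 2 + c 1 ^ 2 * (1 - c 2)) * (1 - x ^ 2) := by
  intro x
  have h0 := hrec 0 x
  have h1 := hrec 1 x
  have h2 := hrec 2 x
  norm_num [hP0, hc0] at h0 h1 h2
  have hP1 : P 1 x = x := h0.symm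
  rw [hP1] at h1 ⊢
  have e1 : (1 - c 1) * P 2 x = x ^ 2 - c 1 := by nlinarith [h1]
  have e2 : (1 - c 2) * P 3 x = x * P 2 x - c 2 * x := by
    rw [hP1] at h2; linarith
  linear_combination ((1 - c 2) * ((1 - c 1) * P 2 x + x ^ 2 - c 1)
      - (1 - c 1) * x ^ 2) * e1 - (1 - c 1) ^ 2 * x * e2
end

section
/- With the symmetric orthogonal polynomial recurrence, Δ_2(x) = ((a_2 - a_1)·(1 - x^2) + a_1·((1 + c_1)·c_2 - c_1))·(1 - x^2) / (a_1^2·a_2) for all real x. Consequently, if c_2 ≥ c_1/(1 + c_1) then Δ_2(x) > 0 for all x ∈ (-1,1), and if c_2 < c_1/(1 + c_1) then Δ_2(x) < 0 for x ∈ (-1,1) sufficiently close to 1. -/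
/-- `Δ_2(x) = ((a_2 - a_1)(1-x^2) + a_1((1+c_1)c_2 - c_1)) (1-x^2) / (a_1^2 a_2)`;
consequently if `c_2 ≥ c_1/(1+c_1)` then `Δ_2 > 0` on `(-1,1)`, and if
`c_2 < c_1/(1+c_1)` then `Δ_2(x) < 0` for `x ∈ (-1,1)` sufficiently close to `1`. -/
theorem turan_delta_two_alt
    (c : ℕ → ℝ) (hc0 : c 0 = 0) (hc : ∀ n, 1 ≤ n → c n ∈ Set.Ioo (0 : ℝ) 1)
    (P : ℕ → ℝ → ℝ) (hP0 : ∀ x, P 0 x = 1)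
    (hrec : ∀ n x, x * P n x = (1 - c n) * P (n + 1) x + c n * P (n - 1) x) :
    (∀ x : ℝ, P 2 x ^ 2 - P 3 x * P 1 x =
      (((1 - c 2) - (1 - c 1)) * (1 - x ^ 2) + (1 - c 1) * ((1 + c 1) * c 2 - c 1)) *
        (1 - x ^ 2) / ((1 - c 1) ^ 2 * (1 - c 2))) ∧
    (c 2 ≥ c 1 / (1 + c 1) →
      ∀ x ∈ Set.Ioo (-1 : ℝ) 1, 0 < P 2 x ^ 2 - P 3 x * P 1 x) ∧
    (c 2 < c 1 / (1 + c 1) →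
      ∃ δ > (0 : ℝ), ∀ x : ℝ, 1 - δ < x → x < 1 → P 2 x ^ 2 - P 3 x * P 1 x < 0) := by
  obtain ⟨hc1p, hc1l⟩ := hc 1 le_rfl
  obtain ⟨hc2p, hc2l⟩ := hc 2 (by norm_num)
  have ha1 : (0:ℝ) < 1 - c 1 := by linarith
  have ha2 : (0:ℝ) < 1 - c 2 := by linarith
  have h1c1 : (0:ℝ) < 1 + c 1 := by linarith
  have h1 : ∀ x : ℝ, P 1 x = x := by
    intro x
    have := hrec 0 x
    rw [hc0, hP0] at this
    linarith
  have h2 : ∀ x : ℝ, P 2 x = (x ^ 2 - c 1) / (1 - c 1) := by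
    intro x
    have := hrec 1 x
    rw [h1, hP0] at this
    rw [eq_div_iff ha1.ne']
    linarith
  have h3 : ∀ x : ℝ, P 3 x = (x * ((x ^ 2 - c 1) / (1 - c 1)) - c 2 * x) / (1 - c 2) := by
    intro x
    have := hrec 2 x
    rw [h2, h1] at this
    rw [eq_div_iff ha2.ne']
    linarith
  have key : ∀ x : ℝ, P 2 x ^ 2 - P 3 x * P 1 x =
      (((1 - c 2) - (1 - c 1)) * (1 - x ^ 2) + (1 - c 1) * ((1 + c 1) * c 2 - c 1)) *
        (1 - x ^ 2) / ((1 - c 1) ^ 2 * (1 - c 2)) := by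
    intro x
    rw [h3, h2, h1]
    field_simp
    ring
  refine ⟨key, ?_, ?_⟩
  · intro hge x hx
    obtain ⟨hx1, hx2⟩ := hx
    rw [key x]
    have hE0 : 0 ≤ (1 - c 1) * ((1 + c 1) * c 2 - c 1) := by
      have : c 1 ≤ c 2 * (1 + c 1) := (div_le_iff₀ h1c1).mp hge
      nlinarith
    have ht : 0 < 1 - x ^ 2 := by nlinarith
    have ht1 : 1 - x ^ 2 ≤ 1 := by nlinarith
    apply div_pos
    · apply mul_pos _ ht
      nlinarith [mul_nonneg (sub_nonneg.2 ht1) hE0,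
        mul_pos ht (mul_pos (mul_pos hc1p hc1p) ha2)]
    · positivity
  · intro hlt
    have hlt' : c 2 * (1 + c 1) < c 1 := (lt_div_iff₀ h1c1).mp hlt
    have hE0 : (1 - c 1) * ((1 + c 1) * c 2 - c 1) < 0 := by nlinarith
    have hs : 0 < c 1 - c 2 := by nlinarith
    set E0 := (1 - c 1) * ((1 + c 1) * c 2 - c 1) with hE0def
    set t0 := -E0 / (c 1 - c 2) with ht0def
    have ht0 : 0 < t0 := div_pos (by linarith) hs
    refine ⟨min (t0 / 2) (1 / 2), lt_min (by linarith) (by norm_num), ?_⟩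
    intro x hx1 hx2
    have hd1 : min (t0 / 2) (1 / 2) ≤ t0 / 2 := min_le_left _ _
    have hd2 : min (t0 / 2) (1 / 2) ≤ 1 / 2 := min_le_right _ _
    have hxl : 1 - min (t0 / 2) (1 / 2) < x := hx1
    have hxpos : (0:ℝ) < x := by linarith
    have ht : 0 < 1 - x ^ 2 := by nlinarith
    have htlt : 1 - x ^ 2 < t0 := by nlinarith
    rw [key x]
    apply div_neg_of_neg_of_pos
    · apply mul_neg_of_neg_of_pos _ ht
      have : (c 1 - c 2) * (1 - x ^ 2) < -E0 := by
        have := (lt_div_iff₀ hs).mp htlt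
        linarith [mul_comm (c 1 - c 2) (1 - x ^ 2) ▸ this]
      nlinarith
    · positivity
end

section
/- With the symmetric orthogonal polynomial recurrence, for every n ≥ 1 one has a_{n+1}^2·a_{n+2}·Δ_{n+2}(x) = ((a_{n+2} - a_{n+1})·x^2 + a_{n+1}^2·c_{n+2})·P_{n+1}(x)^2 + (a_{n+1} - 2a_{n+2})·c_{n+1}·x·P_{n+1}(x)·P_n(x) + a_{n+2}·c_{n+1}^2·P_n(x)^2 for all real x. -/
/-- `a_{n+1}^2 a_{n+2} Δ_{n+2}(x) = ((a_{n+2}-a_{n+1}) x^2 + a_{n+1}^2 c_{n+2}) P_{n+1}^2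
+ (a_{n+1} - 2 a_{n+2}) c_{n+1} x P_{n+1} P_n + a_{n+2} c_{n+1}^2 P_n^2` for `n ≥ 1`. -/
theorem turan_delta_nplus2_expand
    (c : ℕ → ℝ) (hc0 : c 0 = 0) (hc : ∀ n, 1 ≤ n → c n ∈ Set.Ioo (0 : ℝ) 1)
    (P : ℕ → ℝ → ℝ) (hP0 : ∀ x, P 0 x = 1)
    (hrec : ∀ n x, x * P n x = (1 - c n) * P (n + 1) x + c n * P (n - 1) x) :
    ∀ n, 1 ≤ n → ∀ x : ℝ,
      (1 - c (n + 1)) ^ 2 * (1 - c (n + 2)) *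
          (P (n + 2) x ^ 2 - P (n + 3) x * P (n + 1) x) =
        (((1 - c (n + 2)) - (1 - c (n + 1))) * x ^ 2 +
            (1 - c (n + 1)) ^ 2 * c (n + 2)) * P (n + 1) x ^ 2 +
          ((1 - c (n + 1)) - 2 * (1 - c (n + 2))) * c (n + 1) * x *
            (P (n + 1) x * P n x) +
          (1 - c (n + 2)) * c (n + 1) ^ 2 * P n x ^ 2 := by
  intro n hn x
  have ha1 : (1 - c (n + 1)) ≠ 0 := by
    have := (hc (n + 1) (by omega)).2; linarith
  have ha2 : (1 - c (n + 2)) ≠ 0 := by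
    have := (hc (n + 2) (by omega)).2; linarith
  have h1 := hrec (n + 1) x
  have h2 := hrec (n + 2) x
  simp only [show n + 1 - 1 = n from rfl, show n + 2 - 1 = n + 1 from rfl] at h1 h2
  have e2 : P (n + 2) x = (x * P (n + 1) x - c (n + 1) * P n x) / (1 - c (n + 1)) := by
    field_simp; linarith
  have e3 : P (n + 3) x =
      (x * P (n + 2) x - c (n + 2) * P (n + 1) x) / (1 - c (n + 2)) := by
    field_simp; linarith
  rw [e3, e2]
  field_simp
  ring
end

section
/- With the symmetric orthogonal polynomial recurrence, setting A_n := c_n·(a_{n+2} - c_{n+2}), B_n := (a_n - c_{n+2})·c_{n+1}, C_n := (a_n - c_n)·c_{n+2}, one has for every n ≥ 1 and all real x the identity a_{n+1}^2·a_{n+2}·C_n·Δ_{n+2}(x) - a_{n+1}·c_{n+1}·c_{n+2}·A_n·Δ_n(x) = a_{n+1}·c_{n+2}·(C_n - B_n)·(1 - x^2)·P_{n+1}(x)^2 + c_{n+1}·c_{n+2}·(B_n - A_n)·(x·P_{n+1}(x) - P_n(x))^2. -/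
/-- `A_n = c_n (a_{n+2} - c_{n+2})`. -/
noncomputable def turanA (c : ℕ → ℝ) (n : ℕ) : ℝ := c n * ((1 - c (n + 2)) - c (n + 2))

/-- `B_n = (a_n - c_{n+2}) c_{n+1}`. -/
noncomputable def turanB (c : ℕ → ℝ) (n : ℕ) : ℝ := ((1 - c n) - c (n + 2)) * c (n + 1)

/-- `C_n = (a_n - c_n) c_{n+2}`. -/
noncomputable def turanC (c : ℕ → ℝ) (n : ℕ) : ℝ := ((1 - c n) - c n) * c (n + 2)

/-- The crucial combination identity (2.3):
`a_{n+1}^2 a_{n+2} C_n Δ_{n+2} - a_{n+1} c_{n+1} c_{n+2} A_n Δ_n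
= a_{n+1} c_{n+2} (C_n - B_n)(1-x^2) P_{n+1}^2 + c_{n+1} c_{n+2} (B_n - A_n)(x P_{n+1} - P_n)^2`. -/
theorem turan_combination_identity
    (c : ℕ → ℝ) (hc0 : c 0 = 0) (hc : ∀ n, 1 ≤ n → c n ∈ Set.Ioo (0 : ℝ) 1)
    (P : ℕ → ℝ → ℝ) (hP0 : ∀ x, P 0 x = 1)
    (hrec : ∀ n x, x * P n x = (1 - c n) * P (n + 1) x + c n * P (n - 1) x) :
    ∀ n, 1 ≤ n → ∀ x : ℝ,
      (1 - c (n + 1)) ^ 2 * (1 - c (n + 2)) * turanC c n *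
          (P (n + 2) x ^ 2 - P (n + 3) x * P (n + 1) x) -
        (1 - c (n + 1)) * c (n + 1) * c (n + 2) * turanA c n *
          (P n x ^ 2 - P (n + 1) x * P (n - 1) x) =
      (1 - c (n + 1)) * c (n + 2) * (turanC c n - turanB c n) * (1 - x ^ 2) *
          P (n + 1) x ^ 2 +
        c (n + 1) * c (n + 2) * (turanB c n - turanA c n) *
          (x * P (n + 1) x - P n x) ^ 2 := by
  intro n hn x
  have hu : c n ≠ 0 := ne_of_gt (hc n hn).1
  have hv : (1 : ℝ) - c (n + 1) ≠ 0 := sub_ne_zero.mpr (ne_of_gt (hc (n+1) (by omega)).2)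
  have hw : (1 : ℝ) - c (n + 2) ≠ 0 := sub_ne_zero.mpr (ne_of_gt (hc (n+2) (by omega)).2)
  have h1 := hrec n x
  have h2 : x * P (n+1) x = (1 - c (n+1)) * P (n+2) x + c (n+1) * P n x := by
    simpa using hrec (n+1) x
  have h3 : x * P (n+2) x = (1 - c (n+2)) * P (n+3) x + c (n+2) * P (n+1) x := by
    simpa using hrec (n+2) x
  have hr : P (n-1) x = (x * P n x - (1 - c n) * P (n+1) x) / c n := by
    field_simp; linarith
  have ht : P (n+3) x = (x * P (n+2) x - c (n+2) * P (n+1) x) / (1 - c (n+2)) := by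
    field_simp; linarith
  have hs : P (n+2) x = (x * P (n+1) x - c (n+1) * P n x) / (1 - c (n+1)) := by
    field_simp; linarith
  rw [ht, hs, hr]
  simp only [turanA, turanB, turanC]
  field_simp
  ring
end

section
/- Suppose c_2 ≥ c_1/(1 + c_1) and for every n ≥ 1 either 0 ≤ A_n ≤ B_n ≤ C_n or 0 ≥ A_n ≥ B_n ≥ C_n, where A_n := c_n·(a_{n+2} - c_{n+2}), B_n := (a_n - c_{n+2})·c_{n+1}, C_n := (a_n - c_n)·c_{n+2}. Then Δ_n(x) ≥ 0 for all n ≥ 1 and x ∈ [-1,1], and Δ_n(x) > 0 for all n ≥ 1 and x ∈ (-1,1). -/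
set_option maxHeartbeats 1000000

private lemma nn_of_mul {k y : ℝ} (hk : 0 < k) (h : 0 ≤ k * y) : 0 ≤ y := by
  by_contra hy; push_neg at hy; nlinarith

private lemma pos_of_mul {k y : ℝ} (hk : 0 < k) (h : 0 < k * y) : 0 < y := by
  by_contra hy; push_neg at hy; nlinarith

private lemma sq_pos_ne {v : ℝ} (hv : v ≠ 0) : 0 < v ^ 2 :=
  (sq_nonneg v).lt_of_ne (Ne.symm (pow_ne_zero 2 hv))

/-- Weak key certificate lemma. -/
private lemma turan_keyW (p q r x u v : ℝ) (hp0 : 0 < p) (hp1 : p < 1) (hq0 : 0 < q)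
    (hq1 : q < 1) (hr0 : 0 < r) (hr1 : r < 1) (ht : x ^ 2 ≤ 1)
    (halt : (0 ≤ p * (1 - 2 * r) ∧ p * (1 - 2 * r) ≤ q * (1 - p - r) ∧
              q * (1 - p - r) ≤ r * (1 - 2 * p)) ∨
            (p * (1 - 2 * r) ≤ 0 ∧ q * (1 - p - r) ≤ p * (1 - 2 * r) ∧
              r * (1 - 2 * p) ≤ q * (1 - p - r)))
    (hf0 : 0 ≤ p * u ^ 2 - x * u * v + (1 - p) * v ^ 2) :
    0 ≤ q ^ 2 * (1 - r) * u ^ 2 - q * (1 + q - 2 * r) * (x * u * v) +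
      ((q - r) * x ^ 2 + r * (1 - q) ^ 2) * v ^ 2 := by
  have h1t : 0 ≤ 1 - x ^ 2 := by linarith
  rcases halt with ⟨hA, hBA, hCB⟩ | ⟨hA, hBA, hCB⟩
  · -- Case I
    have hr2 : 0 ≤ 1 - 2 * r := nn_of_mul hp0 hA
    have hp2 : 0 ≤ 1 - 2 * p := nn_of_mul hr0 (le_trans (le_trans hA hBA) hCB)
    have hm0 : 0 ≤ (1 - 2 * p) * r * (1 - q) - q * (1 - p) * (1 - 2 * r) := by
      nlinarith [mul_nonneg hA (sub_nonneg.2 hBA), mul_nonneg hA (sub_nonneg.2 hCB),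
        mul_nonneg (sub_nonneg.2 hBA) (sub_nonneg.2 hCB),
        mul_nonneg (mul_nonneg hp0.le hq0.le) hr0.le, sq_nonneg (p - q), sq_nonneg (q - r),
        sq_nonneg (p - r), mul_nonneg hq0.le (sub_nonneg.2 hBA),
        mul_nonneg hr0.le (sub_nonneg.2 hCB), mul_nonneg hp0.le (sub_nonneg.2 hBA)]
    rcases eq_or_lt_of_le hp2 with heq | hlt
    · -- p = 1/2, then r = 1/2
      have hp' : p = 1 / 2 := by linarith
      have hC0 : r * (1 - 2 * p) = 0 := by
        have h0 : (1:ℝ) - 2 * p = 0 := by linarith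
        rw [h0, mul_zero]
      have hB0 : q * (1 - p - r) = 0 := le_antisymm (hC0 ▸ hCB) (le_trans hA hBA)
      have hr' : r = 1 / 2 := by
        rcases mul_eq_zero.mp hB0 with h | h
        · exact absurd h (ne_of_gt hq0)
        · linarith [hp']
      subst hp' hr'
      nlinarith [sq_nonneg (u - x * v),
        mul_nonneg (mul_nonneg (sq_nonneg (1 - q)) h1t) (sq_nonneg v), hq0, hq1]
    · -- 0 < 1 - 2p : master identity
      have key : (1 - 2 * p) * (q ^ 2 * (1 - r) * u ^ 2 - q * (1 + q - 2 * r) * (x * u * v) +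
          ((q - r) * x ^ 2 + r * (1 - q) ^ 2) * v ^ 2) =
          q * (1 - q) * (1 - 2 * r) * (p * u ^ 2 - x * u * v + (1 - p) * v ^ 2) +
          q * (q * (1 - p - r) - p * (1 - 2 * r)) * (u - x * v) ^ 2 +
          (1 - q) * ((1 - 2 * p) * r * (1 - q) - q * (1 - p) * (1 - 2 * r)) *
            ((1 - x ^ 2) * v ^ 2) := by ring
      refine nn_of_mul hlt ?_
      rw [key]
      have t1 : 0 ≤ q * (1 - q) * (1 - 2 * r) * (p * u ^ 2 - x * u * v + (1 - p) * v ^ 2) :=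
        mul_nonneg (mul_nonneg (mul_nonneg hq0.le (by linarith)) hr2) hf0
      have t2 : 0 ≤ q * (q * (1 - p - r) - p * (1 - 2 * r)) * (u - x * v) ^ 2 :=
        mul_nonneg (mul_nonneg hq0.le (sub_nonneg.2 hBA)) (sq_nonneg _)
      have t3 : 0 ≤ (1 - q) * ((1 - 2 * p) * r * (1 - q) - q * (1 - p) * (1 - 2 * r)) *
          ((1 - x ^ 2) * v ^ 2) :=
        mul_nonneg (mul_nonneg (by linarith) hm0) (mul_nonneg h1t (sq_nonneg v))
      linarith
  · -- Case II
    have hr2 : 0 ≤ 2 * r - 1 := nn_of_mul hp0 (by nlinarith)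
    have hp2 : 0 ≤ 2 * p - 1 := nn_of_mul hr0 (by nlinarith [le_trans hCB (le_trans hBA hA)])
    have hm0 : 0 ≤ q * (1 - p) * (1 - 2 * r) - (1 - 2 * p) * r * (1 - q) := by
      nlinarith [mul_nonneg (neg_nonneg.2 hA) (sub_nonneg.2 hBA),
        mul_nonneg (neg_nonneg.2 hA) (sub_nonneg.2 hCB),
        mul_nonneg (sub_nonneg.2 hBA) (sub_nonneg.2 hCB),
        mul_nonneg (mul_nonneg hp0.le hq0.le) hr0.le, sq_nonneg (p - q), sq_nonneg (q - r),
        sq_nonneg (p - r), mul_nonneg hq0.le (sub_nonneg.2 hBA),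
        mul_nonneg hr0.le (sub_nonneg.2 hCB), mul_nonneg hp0.le (sub_nonneg.2 hBA)]
    rcases eq_or_lt_of_le hp2 with heq | hlt
    · have hp' : p = 1 / 2 := by linarith
      have hC0 : r * (1 - 2 * p) = 0 := by
        have h0 : (1:ℝ) - 2 * p = 0 := by linarith
        rw [h0, mul_zero]
      have hB0 : q * (1 - p - r) = 0 := le_antisymm (le_trans hBA hA) (hC0 ▸ hCB)
      have hr' : r = 1 / 2 := by
        rcases mul_eq_zero.mp hB0 with h | h
        · exact absurd h (ne_of_gt hq0)
        · linarith [hp']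
      subst hp' hr'
      nlinarith [sq_nonneg (u - x * v),
        mul_nonneg (mul_nonneg (sq_nonneg (1 - q)) h1t) (sq_nonneg v), hq0, hq1]
    · have key : (2 * p - 1) * (q ^ 2 * (1 - r) * u ^ 2 - q * (1 + q - 2 * r) * (x * u * v) +
          ((q - r) * x ^ 2 + r * (1 - q) ^ 2) * v ^ 2) =
          q * (1 - q) * (2 * r - 1) * (p * u ^ 2 - x * u * v + (1 - p) * v ^ 2) +
          q * (p * (1 - 2 * r) - q * (1 - p - r)) * (u - x * v) ^ 2 +
          (1 - q) * (q * (1 - p) * (1 - 2 * r) - (1 - 2 * p) * r * (1 - q)) *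
            ((1 - x ^ 2) * v ^ 2) := by ring
      refine nn_of_mul hlt ?_
      rw [key]
      have t1 : 0 ≤ q * (1 - q) * (2 * r - 1) * (p * u ^ 2 - x * u * v + (1 - p) * v ^ 2) :=
        mul_nonneg (mul_nonneg (mul_nonneg hq0.le (by linarith)) hr2) hf0
      have t2 : 0 ≤ q * (p * (1 - 2 * r) - q * (1 - p - r)) * (u - x * v) ^ 2 :=
        mul_nonneg (mul_nonneg hq0.le (sub_nonneg.2 hBA)) (sq_nonneg _)
      have t3 : 0 ≤ (1 - q) * (q * (1 - p) * (1 - 2 * r) - (1 - 2 * p) * r * (1 - q)) *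
          ((1 - x ^ 2) * v ^ 2) :=
        mul_nonneg (mul_nonneg (by linarith) hm0) (mul_nonneg h1t (sq_nonneg v))
      linarith

/-- Strict key certificate lemma. -/
private lemma turan_keyS (p q r x u v : ℝ) (hp0 : 0 < p) (hp1 : p < 1) (hq0 : 0 < q)
    (hq1 : q < 1) (hr0 : 0 < r) (hr1 : r < 1) (ht : x ^ 2 < 1)
    (halt : (0 ≤ p * (1 - 2 * r) ∧ p * (1 - 2 * r) ≤ q * (1 - p - r) ∧
              q * (1 - p - r) ≤ r * (1 - 2 * p)) ∨
            (p * (1 - 2 * r) ≤ 0 ∧ q * (1 - p - r) ≤ p * (1 - 2 * r) ∧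
              r * (1 - 2 * p) ≤ q * (1 - p - r)))
    (hf0 : 0 < p * u ^ 2 - x * u * v + (1 - p) * v ^ 2) :
    0 < q ^ 2 * (1 - r) * u ^ 2 - q * (1 + q - 2 * r) * (x * u * v) +
      ((q - r) * x ^ 2 + r * (1 - q) ^ 2) * v ^ 2 := by
  have h1t : 0 < 1 - x ^ 2 := by linarith
  rcases halt with ⟨hA, hBA, hCB⟩ | ⟨hA, hBA, hCB⟩
  · -- Case I
    have hr2 : 0 ≤ 1 - 2 * r := nn_of_mul hp0 hA
    have hp2 : 0 ≤ 1 - 2 * p := nn_of_mul hr0 (le_trans (le_trans hA hBA) hCB)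
    rcases eq_or_lt_of_le hp2 with heq | hlt
    · -- p = 1/2, then r = 1/2 ; special identity
      have hp' : p = 1 / 2 := by linarith
      have hC0 : r * (1 - 2 * p) = 0 := by
        have h0 : (1:ℝ) - 2 * p = 0 := by linarith
        rw [h0, mul_zero]
      have hB0 : q * (1 - p - r) = 0 := le_antisymm (hC0 ▸ hCB) (le_trans hA hBA)
      have hr' : r = 1 / 2 := by
        rcases mul_eq_zero.mp hB0 with h | h
        · exact absurd h (ne_of_gt hq0)
        · linarith [hp']
      subst hp' hr'
      rcases eq_or_ne v 0 with hv | hv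
      · subst hv
        have hu : 0 < u ^ 2 := by nlinarith
        nlinarith [mul_pos (mul_pos hq0 hq0) hu]
      · have hv2 : 0 < v ^ 2 := sq_pos_ne hv
        nlinarith [sq_nonneg (u - x * v),
          mul_pos (mul_pos (mul_pos (by linarith : (0:ℝ) < 1 - q) (by linarith : (0:ℝ) < 1 - q))
            h1t) hv2]
    · -- 0 < 1 - 2p
      have hm0 : 0 ≤ (1 - 2 * p) * r * (1 - q) - q * (1 - p) * (1 - 2 * r) := by
        nlinarith [mul_nonneg hA (sub_nonneg.2 hBA), mul_nonneg hA (sub_nonneg.2 hCB),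
          mul_nonneg (sub_nonneg.2 hBA) (sub_nonneg.2 hCB),
          mul_nonneg (mul_nonneg hp0.le hq0.le) hr0.le, sq_nonneg (p - q), sq_nonneg (q - r),
          sq_nonneg (p - r), mul_nonneg hq0.le (sub_nonneg.2 hBA),
          mul_nonneg hr0.le (sub_nonneg.2 hCB), mul_nonneg hp0.le (sub_nonneg.2 hBA)]
      refine pos_of_mul hlt ?_
      have key : (1 - 2 * p) * (q ^ 2 * (1 - r) * u ^ 2 - q * (1 + q - 2 * r) * (x * u * v) +
          ((q - r) * x ^ 2 + r * (1 - q) ^ 2) * v ^ 2) =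
          q * (1 - q) * (1 - 2 * r) * (p * u ^ 2 - x * u * v + (1 - p) * v ^ 2) +
          q * (q * (1 - p - r) - p * (1 - 2 * r)) * (u - x * v) ^ 2 +
          (1 - q) * ((1 - 2 * p) * r * (1 - q) - q * (1 - p) * (1 - 2 * r)) *
            ((1 - x ^ 2) * v ^ 2) := by ring
      rw [key]
      clear key
      have t2 : 0 ≤ q * (q * (1 - p - r) - p * (1 - 2 * r)) * (u - x * v) ^ 2 :=
        mul_nonneg (mul_nonneg hq0.le (sub_nonneg.2 hBA)) (sq_nonneg _)
      have t3 : 0 ≤ (1 - q) * ((1 - 2 * p) * r * (1 - q) - q * (1 - p) * (1 - 2 * r)) *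
          ((1 - x ^ 2) * v ^ 2) :=
        mul_nonneg (mul_nonneg (by linarith) hm0) (mul_nonneg h1t.le (sq_nonneg v))
      rcases eq_or_lt_of_le hr2 with heqr | hltr
      · -- r = 1/2
        have hr' : r = 1 / 2 := by linarith
        subst hr'
        rcases eq_or_ne v 0 with hv | hv
        · subst hv
          have hu : 0 < u ^ 2 := by nlinarith
          have hba : 0 < q * (1 - p - 1/2) - p * (1 - 2 * (1/2)) := by nlinarith
          nlinarith [mul_pos (mul_pos hq0 hba) hu, sq_nonneg (u - x * 0)]
        · have hv2 : 0 < v ^ 2 := sq_pos_ne hv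
          have hm0' : 0 < (1 - 2 * p) * (1/2) * (1 - q) - q * (1 - p) * (1 - 2 * (1/2)) := by
            nlinarith
          nlinarith [mul_pos (mul_pos (by linarith : (0:ℝ) < 1 - q) hm0') (mul_pos h1t hv2),
            mul_nonneg (mul_nonneg hq0.le (by nlinarith : 0 ≤ q * (1 - p - 1/2) -
              p * (1 - 2 * (1/2)))) (sq_nonneg (u - x * v)),
            mul_nonneg (mul_nonneg (mul_nonneg hq0.le (by linarith : (0:ℝ) ≤ 1 - q))
              (by linarith : (0:ℝ) ≤ 1 - 2 * (1/2))) hf0.le]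
      · -- r < 1/2
        have t1 : 0 < q * (1 - q) * (1 - 2 * r) * (p * u ^ 2 - x * u * v + (1 - p) * v ^ 2) :=
          mul_pos (mul_pos (mul_pos hq0 (by linarith)) hltr) hf0
        linarith
  · -- Case II
    have hr2 : 0 ≤ 2 * r - 1 := nn_of_mul hp0 (by nlinarith)
    have hp2 : 0 ≤ 2 * p - 1 := nn_of_mul hr0 (by nlinarith [le_trans hCB (le_trans hBA hA)])
    rcases eq_or_lt_of_le hp2 with heq | hlt
    · have hp' : p = 1 / 2 := by linarith
      have hC0 : r * (1 - 2 * p) = 0 := by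
        have h0 : (1:ℝ) - 2 * p = 0 := by linarith
        rw [h0, mul_zero]
      have hB0 : q * (1 - p - r) = 0 := le_antisymm (le_trans hBA hA) (hC0 ▸ hCB)
      have hr' : r = 1 / 2 := by
        rcases mul_eq_zero.mp hB0 with h | h
        · exact absurd h (ne_of_gt hq0)
        · linarith [hp']
      subst hp' hr'
      rcases eq_or_ne v 0 with hv | hv
      · subst hv
        have hu : 0 < u ^ 2 := by nlinarith
        nlinarith [mul_pos (mul_pos hq0 hq0) hu]
      · have hv2 : 0 < v ^ 2 := sq_pos_ne hv
        nlinarith [sq_nonneg (u - x * v),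
          mul_pos (mul_pos (mul_pos (by linarith : (0:ℝ) < 1 - q) (by linarith : (0:ℝ) < 1 - q))
            h1t) hv2]
    · have hm0 : 0 ≤ q * (1 - p) * (1 - 2 * r) - (1 - 2 * p) * r * (1 - q) := by
        nlinarith [mul_nonneg (neg_nonneg.2 hA) (sub_nonneg.2 hBA),
          mul_nonneg (neg_nonneg.2 hA) (sub_nonneg.2 hCB),
          mul_nonneg (sub_nonneg.2 hBA) (sub_nonneg.2 hCB),
          mul_nonneg (mul_nonneg hp0.le hq0.le) hr0.le, sq_nonneg (p - q), sq_nonneg (q - r),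
          sq_nonneg (p - r), mul_nonneg hq0.le (sub_nonneg.2 hBA),
          mul_nonneg hr0.le (sub_nonneg.2 hCB), mul_nonneg hp0.le (sub_nonneg.2 hBA)]
      refine pos_of_mul hlt ?_
      have key : (2 * p - 1) * (q ^ 2 * (1 - r) * u ^ 2 - q * (1 + q - 2 * r) * (x * u * v) +
          ((q - r) * x ^ 2 + r * (1 - q) ^ 2) * v ^ 2) =
          q * (1 - q) * (2 * r - 1) * (p * u ^ 2 - x * u * v + (1 - p) * v ^ 2) +
          q * (p * (1 - 2 * r) - q * (1 - p - r)) * (u - x * v) ^ 2 +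
          (1 - q) * (q * (1 - p) * (1 - 2 * r) - (1 - 2 * p) * r * (1 - q)) *
            ((1 - x ^ 2) * v ^ 2) := by ring
      rw [key]
      clear key
      have t2 : 0 ≤ q * (p * (1 - 2 * r) - q * (1 - p - r)) * (u - x * v) ^ 2 :=
        mul_nonneg (mul_nonneg hq0.le (sub_nonneg.2 hBA)) (sq_nonneg _)
      have t3 : 0 ≤ (1 - q) * (q * (1 - p) * (1 - 2 * r) - (1 - 2 * p) * r * (1 - q)) *
          ((1 - x ^ 2) * v ^ 2) :=
        mul_nonneg (mul_nonneg (by linarith) hm0) (mul_nonneg h1t.le (sq_nonneg v))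
      rcases eq_or_lt_of_le hr2 with heqr | hltr
      · have hr' : r = 1 / 2 := by linarith
        subst hr'
        rcases eq_or_ne v 0 with hv | hv
        · subst hv
          have hu : 0 < u ^ 2 := by nlinarith
          have hba : 0 < p * (1 - 2 * (1/2)) - q * (1 - p - 1/2) := by nlinarith
          nlinarith [mul_pos (mul_pos hq0 hba) hu, sq_nonneg (u - x * 0)]
        · have hv2 : 0 < v ^ 2 := sq_pos_ne hv
          have hm0' : 0 < q * (1 - p) * (1 - 2 * (1/2)) - (1 - 2 * p) * (1/2) * (1 - q) := by
            nlinarith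
          nlinarith [mul_pos (mul_pos (by linarith : (0:ℝ) < 1 - q) hm0') (mul_pos h1t hv2),
            mul_nonneg (mul_nonneg hq0.le (by nlinarith : 0 ≤ p * (1 - 2 * (1/2)) -
              q * (1 - p - 1/2))) (sq_nonneg (u - x * v)),
            mul_nonneg (mul_nonneg (mul_nonneg hq0.le (by linarith : (0:ℝ) ≤ 1 - q))
              (by linarith : (0:ℝ) ≤ 2 * (1/2) - 1)) hf0.le]
      · have t1 : 0 < q * (1 - q) * (2 * r - 1) * (p * u ^ 2 - x * u * v + (1 - p) * v ^ 2) :=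
          mul_pos (mul_pos (mul_pos hq0 (by linarith)) hltr) hf0
        linarith

/-- Theorem 2.2 (first part): if `c_2 ≥ c_1/(1+c_1)` and for every `n ≥ 1` either
`0 ≤ A_n ≤ B_n ≤ C_n` or `0 ≥ A_n ≥ B_n ≥ C_n`, then Turán's inequality holds. -/
theorem turan_general_criterion
    (c : ℕ → ℝ) (hc0 : c 0 = 0) (hc : ∀ n, 1 ≤ n → c n ∈ Set.Ioo (0 : ℝ) 1)
    (P : ℕ → ℝ → ℝ) (hP0 : ∀ x, P 0 x = 1)
    (hrec : ∀ n x, x * P n x = (1 - c n) * P (n + 1) x + c n * P (n - 1) x)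
    (hc2 : c 2 ≥ c 1 / (1 + c 1))
    (halt : ∀ n, 1 ≤ n →
      (0 ≤ turanA c n ∧ turanA c n ≤ turanB c n ∧ turanB c n ≤ turanC c n) ∨
      (0 ≥ turanA c n ∧ turanA c n ≥ turanB c n ∧ turanB c n ≥ turanC c n)) :
    (∀ n, 1 ≤ n → ∀ x ∈ Set.Icc (-1 : ℝ) 1,
      0 ≤ P n x ^ 2 - P (n + 1) x * P (n - 1) x) ∧
    (∀ n, 1 ≤ n → ∀ x ∈ Set.Ioo (-1 : ℝ) 1,
      0 < P n x ^ 2 - P (n + 1) x * P (n - 1) x) := by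
  obtain ⟨hc1a, hc1b⟩ := hc 1 (by norm_num)
  obtain ⟨hc2a, hc2b⟩ := hc 2 (by norm_num)
  have hc2' : c 1 ≤ c 2 * (1 + c 1) := by
    rw [ge_iff_le, div_le_iff₀ (by linarith : (0:ℝ) < 1 + c 1)] at hc2
    linarith
  have hP1 : ∀ x : ℝ, P 1 x = x := by
    intro x
    have h := hrec 0 x
    rw [hP0, hc0] at h
    norm_num at h
    linarith
  have e2 : ∀ x : ℝ, (1 - c 1) * P 2 x = x ^ 2 - c 1 := by
    intro x
    have h := hrec 1 x
    norm_num at h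
    rw [hP1, hP0] at h
    linear_combination -h
  have e3 : ∀ x : ℝ, (1 - c 2) * P 3 x = x * P 2 x - c 2 * x := by
    intro x
    have h := hrec 2 x
    norm_num at h
    rw [hP1] at h
    linear_combination -h
  have base1w : ∀ x : ℝ, -1 ≤ x → x ≤ 1 → 0 ≤ P 1 x ^ 2 - P 2 x * P 0 x := by
    intro x h1 h2
    rw [hP1, hP0]
    refine nn_of_mul (show (0:ℝ) < 1 - c 1 by linarith) ?_
    have key : (1 - c 1) * (x ^ 2 - P 2 x * 1) = c 1 * (1 - x ^ 2) := by
      linear_combination -e2 x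
    rw [key]
    exact mul_nonneg hc1a.le (by nlinarith)
  have base1s : ∀ x : ℝ, -1 < x → x < 1 → 0 < P 1 x ^ 2 - P 2 x * P 0 x := by
    intro x h1 h2
    rw [hP1, hP0]
    refine pos_of_mul (show (0:ℝ) < 1 - c 1 by linarith) ?_
    have key : (1 - c 1) * (x ^ 2 - P 2 x * 1) = c 1 * (1 - x ^ 2) := by
      linear_combination -e2 x
    rw [key]
    exact mul_pos hc1a (by nlinarith)
  have hid2 : ∀ x : ℝ, (1 - c 1) ^ 2 * (1 - c 2) * (P 2 x ^ 2 - P 3 x * P 1 x) =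
      (1 - x ^ 2) * ((c 2 - c 1) * x ^ 2 + (1 - c 2) * c 1 ^ 2) := by
    intro x
    rw [hP1]
    linear_combination ((1 - c 2) * ((1 - c 1) * P 2 x + x ^ 2 - c 1) - (1 - c 1) * x ^ 2) * e2 x
      + (-(1 - c 1) ^ 2 * x) * e3 x
  have hbr1 : 0 ≤ c 2 - c 1 + (1 - c 2) * c 1 ^ 2 := by nlinarith
  have base2w : ∀ x : ℝ, -1 ≤ x → x ≤ 1 → 0 ≤ P 2 x ^ 2 - P 3 x * P 1 x := by
    intro x h1 h2
    refine nn_of_mul (mul_pos (pow_pos (by linarith : (0:ℝ) < 1 - c 1) 2)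
      (by linarith : (0:ℝ) < 1 - c 2)) ?_
    rw [hid2 x]
    have ht : x ^ 2 ≤ 1 := by nlinarith
    nlinarith [mul_nonneg (mul_nonneg (sub_nonneg.2 ht) (sub_nonneg.2 ht))
        (mul_nonneg (sq_nonneg (c 1)) (by linarith : (0:ℝ) ≤ 1 - c 2)),
      mul_nonneg (mul_nonneg (sub_nonneg.2 ht) (sq_nonneg x)) hbr1]
  have base2s : ∀ x : ℝ, -1 < x → x < 1 → 0 < P 2 x ^ 2 - P 3 x * P 1 x := by
    intro x h1 h2
    refine pos_of_mul (mul_pos (pow_pos (by linarith : (0:ℝ) < 1 - c 1) 2)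
      (by linarith : (0:ℝ) < 1 - c 2)) ?_
    rw [hid2 x]
    have ht : x ^ 2 < 1 := by nlinarith
    nlinarith [mul_pos (mul_pos (sub_pos.2 ht) (sub_pos.2 ht))
        (mul_pos (mul_pos hc1a hc1a) (by linarith : (0:ℝ) < 1 - c 2)),
      mul_nonneg (mul_nonneg (sub_nonneg.2 ht.le) (sq_nonneg x)) hbr1,
      sq_nonneg (c 1), mul_pos hc1a hc1a]
  -- induction step
  have step : ∀ k : ℕ,
      ((∀ x : ℝ, -1 ≤ x → x ≤ 1 → 0 ≤ P (k+1) x ^ 2 - P (k+2) x * P k x) ∧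
       (∀ x : ℝ, -1 < x → x < 1 → 0 < P (k+1) x ^ 2 - P (k+2) x * P k x)) →
      ((∀ x : ℝ, -1 ≤ x → x ≤ 1 → 0 ≤ P (k+3) x ^ 2 - P (k+4) x * P (k+2) x) ∧
       (∀ x : ℝ, -1 < x → x < 1 → 0 < P (k+3) x ^ 2 - P (k+4) x * P (k+2) x)) := by
    intro k hIH
    obtain ⟨IHw, IHs⟩ := hIH
    obtain ⟨hpa, hpb⟩ := hc (k+1) (by omega)
    obtain ⟨hqa, hqb⟩ := hc (k+2) (by omega)
    obtain ⟨hra, hrb⟩ := hc (k+3) (by omega)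
    have he1 : ∀ x : ℝ, (1 - c (k+1)) * P (k+2) x = x * P (k+1) x - c (k+1) * P k x := by
      intro x
      have h := hrec (k+1) x
      rw [show k+1-1 = k from by omega, show k+1+1 = k+2 from rfl] at h
      linarith
    have he3 : ∀ x : ℝ, (1 - c (k+2)) * P (k+3) x = x * P (k+2) x - c (k+2) * P (k+1) x := by
      intro x
      have h := hrec (k+2) x
      rw [show k+2-1 = k+1 from by omega, show k+2+1 = k+3 from rfl] at h
      linarith
    have he4 : ∀ x : ℝ, (1 - c (k+3)) * P (k+4) x = x * P (k+3) x - c (k+3) * P (k+2) x := by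
      intro x
      have h := hrec (k+3) x
      rw [show k+3-1 = k+2 from by omega, show k+3+1 = k+4 from rfl] at h
      linarith
    have hf0eq : ∀ x : ℝ, c (k+1) * P (k+1) x ^ 2 - x * P (k+1) x * P (k+2) x +
        (1 - c (k+1)) * P (k+2) x ^ 2
        = c (k+1) * (P (k+1) x ^ 2 - P (k+2) x * P k x) := by
      intro x
      linear_combination (P (k+2) x) * he1 x
    have hid : ∀ x : ℝ, (1 - c (k+2)) ^ 2 * (1 - c (k+3)) *
        (P (k+3) x ^ 2 - P (k+4) x * P (k+2) x) =
        c (k+2) ^ 2 * (1 - c (k+3)) * P (k+1) x ^ 2 -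
          c (k+2) * (1 + c (k+2) - 2 * c (k+3)) * (x * P (k+1) x * P (k+2) x) +
          ((c (k+2) - c (k+3)) * x ^ 2 + c (k+3) * (1 - c (k+2)) ^ 2) * P (k+2) x ^ 2 := by
      intro x
      linear_combination ((1 - c (k+3)) * ((1 - c (k+2)) * P (k+3) x + x * P (k+2) x -
        c (k+2) * P (k+1) x) - (1 - c (k+2)) * P (k+2) x * x) * he3 x +
        (-(1 - c (k+2)) ^ 2 * P (k+2) x) * he4 x
    have halt1 := halt (k+1) (by omega)
    simp only [turanA, turanB, turanC] at halt1
    rw [show k+1+2 = k+3 from rfl, show k+1+1 = k+2 from rfl] at halt1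
    have halt2 : (0 ≤ c (k+1) * (1 - 2 * c (k+3)) ∧
        c (k+1) * (1 - 2 * c (k+3)) ≤ c (k+2) * (1 - c (k+1) - c (k+3)) ∧
        c (k+2) * (1 - c (k+1) - c (k+3)) ≤ c (k+3) * (1 - 2 * c (k+1))) ∨
        (c (k+1) * (1 - 2 * c (k+3)) ≤ 0 ∧
        c (k+2) * (1 - c (k+1) - c (k+3)) ≤ c (k+1) * (1 - 2 * c (k+3)) ∧
        c (k+3) * (1 - 2 * c (k+1)) ≤ c (k+2) * (1 - c (k+1) - c (k+3))) := by
      rcases halt1 with ⟨a1, a2, a3⟩ | ⟨a1, a2, a3⟩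
      · exact Or.inl ⟨by nlinarith, by nlinarith, by nlinarith⟩
      · exact Or.inr ⟨by nlinarith, by nlinarith, by nlinarith⟩
    constructor
    · intro x h1 h2
      have ht : x ^ 2 ≤ 1 := by nlinarith
      have hf0 : 0 ≤ c (k+1) * P (k+1) x ^ 2 - x * P (k+1) x * P (k+2) x +
          (1 - c (k+1)) * P (k+2) x ^ 2 := by
        rw [hf0eq x]
        exact mul_nonneg hpa.le (IHw x h1 h2)
      have hkey := turan_keyW (c (k+1)) (c (k+2)) (c (k+3)) x (P (k+1) x) (P (k+2) x)
        hpa hpb hqa hqb hra hrb ht halt2 hf0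
      refine nn_of_mul (mul_pos (pow_pos (by linarith : (0:ℝ) < 1 - c (k+2)) 2)
        (by linarith : (0:ℝ) < 1 - c (k+3))) ?_
      rw [hid x]
      exact hkey
    · intro x h1 h2
      have ht : x ^ 2 < 1 := by nlinarith
      have hf0 : 0 < c (k+1) * P (k+1) x ^ 2 - x * P (k+1) x * P (k+2) x +
          (1 - c (k+1)) * P (k+2) x ^ 2 := by
        rw [hf0eq x]
        exact mul_pos hpa (IHs x h1 h2)
      have hkey := turan_keyS (c (k+1)) (c (k+2)) (c (k+3)) x (P (k+1) x) (P (k+2) x)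
        hpa hpb hqa hqb hra hrb ht halt2 hf0
      refine pos_of_mul (mul_pos (pow_pos (by linarith : (0:ℝ) < 1 - c (k+2)) 2)
        (by linarith : (0:ℝ) < 1 - c (k+3))) ?_
      rw [hid x]
      exact hkey
  have main : ∀ m : ℕ,
      (∀ x : ℝ, -1 ≤ x → x ≤ 1 → 0 ≤ P (m+1) x ^ 2 - P (m+2) x * P m x) ∧
      (∀ x : ℝ, -1 < x → x < 1 → 0 < P (m+1) x ^ 2 - P (m+2) x * P m x) := by
    intro m
    induction m using Nat.strong_induction_on with
    | _ m ih =>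
      rcases m with _ | m'
      · exact ⟨base1w, base1s⟩
      · rcases m' with _ | k
        · exact ⟨base2w, base2s⟩
        · exact step k (ih k (by omega))
  constructor
  · intro n hn x hx
    obtain ⟨m, rfl⟩ : ∃ m, n = m + 1 := ⟨n - 1, by omega⟩
    rw [show m + 1 - 1 = m from by omega]
    exact (main m).1 x hx.1 hx.2
  · intro n hn x hx
    obtain ⟨m, rfl⟩ : ∃ m, n = m + 1 := ⟨n - 1, by omega⟩
    rw [show m + 1 - 1 = m from by omega]
    exact (main m).2 x hx.1 hx.2
end

section
/- Let (c_{m,n}) satisfy the chain-sequence-type recursion a_{m,n+1}·c_{m,n} = c_{m+1,n}·a_{m+1,n-1} for all m ≥ 0, n ≥ 1, with a_{m,n} := 1 - c_{m,n}, c_{m,0} = 0 and all c_{m,n} ∈ (0,1) for n ≥ 1. Then c_{m+1,n} < a_{m,n+1} for all m ≥ 0 and n ≥ 1. -/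
/-- For the iterated minimal parameter sequences satisfying
`a_{m,n+1} c_{m,n} = c_{m+1,n} a_{m+1,n-1}`, one has `c_{m+1,n} < a_{m,n+1}`
for all `m ≥ 0`, `n ≥ 1`. -/
theorem chain_sequence_bound
    (c : ℕ → ℕ → ℝ) (hc0 : ∀ m, c m 0 = 0)
    (hc : ∀ m n, 1 ≤ n → c m n ∈ Set.Ioo (0 : ℝ) 1)
    (hrec : ∀ m n, 1 ≤ n →
      (1 - c m (n + 1)) * c m n = c (m + 1) n * (1 - c (m + 1) (n - 1))) :
    ∀ m n, 1 ≤ n → c (m + 1) n < 1 - c m (n + 1) := by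
  intro m n hn
  induction n with
  | zero => omega
  | succ k ih =>
    rcases Nat.eq_zero_or_pos k with hk | hk
    · subst hk
      have h := hrec m 1 le_rfl
      simp only [hc0 (m + 1)] at h
      have h1 := hc m 1 le_rfl
      have h2 := hc m 2 one_le_two
      have : c (m + 1) 1 = (1 - c m 2) * c m 1 := by linarith [h]
      rw [this]
      nlinarith [h1.1, h1.2, h2.1, h2.2]
    · have ih' := ih hk
      -- ih' : c (m+1) k < 1 - c m (k+1)
      have h := hrec m (k + 1) (by omega)
      simp only [Nat.add_sub_cancel] at h
      -- h : (1 - c m (k+2)) * c m (k+1) = c (m+1) (k+1) * (1 - c (m+1) k)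
      have h1 := hc m (k + 1) (by omega)
      have h2 := hc m (k + 2) (by omega)
      have h3 := hc (m + 1) (k + 1) (by omega)
      have hA : 0 < 1 - c (m + 1) k := by
        rcases Nat.eq_zero_or_pos k with hk0 | hk0
        · simp [hk0, hc0]
        · linarith [(hc (m + 1) k hk0).2]
      -- c m (k+1) < 1 - c (m+1) k, since c (m+1) k < 1 - c m (k+1)
      have hlt : c m (k + 1) < 1 - c (m + 1) k := by linarith
      nlinarith [h2.1, h2.2, h3.1, h1.1]
end

section
/- Suppose a_{m,n+1}·c_{m,n+1} ≥ a_{m+1,n}·c_{m+1,n} for all m ≥ 0 and n ≥ 1 (with the setup of iterated chain sequences and the Berg–Szwarc relation Δ_{m,n+1}(x) = s_{m,n}·(1-x^2)·P_{m+1,n}(x)^2 + t_{m,n}·(1-x^2)·Δ_{m+1,n}(x)). Then for every n ≥ 1 and m ≥ 0, Δ_{m,n}(x) = Σ_{k=1}^{n} (1-x^2)^k · P_{m+k,n-k}(x)^2 · s_{m+k-1,n-k} · Π_{j=1}^{k-1} t_{m+j-1,n-j}, where s_{m,n} := (a_{m,n+1}·c_{m,n+1} - a_{m+1,n}·c_{m+1,n})/C_{m,n}^2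 and t_{m,n} := a_{m+1,n}·c_{m+1,n}/C_{m,n}^2. -/
/-- Theorem 2.5 (representation): under the Berg–Szwarc relation at each level `m`,
`Δ_{m,n}(x) = Σ_{k=1}^{n} (1-x^2)^k P_{m+k,n-k}(x)^2 s_{m+k-1,n-k} Π_{j=1}^{k-1} t_{m+j-1,n-j}`. -/
theorem turan_nonneg_representation
    (c : ℕ → ℕ → ℝ) (hc0 : ∀ m, c m 0 = 0)
    (hc : ∀ m n, 1 ≤ n → c m n ∈ Set.Ioo (0 : ℝ) 1)
    (C : ℕ → ℕ → ℝ) (hC : ∀ m n, C m n < 0)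
    (P : ℕ → ℕ → ℝ → ℝ) (hP0 : ∀ m x, P m 0 x = 1)
    (hconn : ∀ m n x, (1 - x ^ 2) * P (m + 1) n x =
      C m n * (P m (n + 2) x - P m n x))
    (hmono : ∀ m n, 1 ≤ n →
      (1 - c m (n + 1)) * c m (n + 1) ≥ (1 - c (m + 1) n) * c (m + 1) n)
    (s t : ℕ → ℕ → ℝ)
    (hs : ∀ m n, s m n =
      ((1 - c m (n + 1)) * c m (n + 1) - (1 - c (m + 1) n) * c (m + 1) n) / C m n ^ 2)
    (ht : ∀ m n, t m n = (1 - c (m + 1) n) * c (m + 1) n / C m n ^ 2)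
    (Δ : ℕ → ℕ → ℝ → ℝ)
    (hΔ : ∀ m n x, Δ m n x = P m n x ^ 2 - P m (n + 1) x * P m (n - 1) x)
    (hBS : ∀ m n x, Δ m (n + 1) x =
      s m n * (1 - x ^ 2) * P (m + 1) n x ^ 2 + t m n * (1 - x ^ 2) * Δ (m + 1) n x) :
    ∀ n, 1 ≤ n → ∀ m, ∀ x : ℝ,
      Δ m n x = ∑ k ∈ Finset.Icc 1 n,
        (1 - x ^ 2) ^ k * P (m + k) (n - k) x ^ 2 * s (m + k - 1) (n - k) *
          ∏ j ∈ Finset.Icc 1 (k - 1), t (m + j - 1) (n - j) := by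
  have key : ∀ n m (x : ℝ), Δ m (n + 1) x = ∑ k ∈ Finset.Icc 1 (n + 1),
      (1 - x ^ 2) ^ k * P (m + k) (n + 1 - k) x ^ 2 * s (m + k - 1) (n + 1 - k) *
        ∏ j ∈ Finset.Icc 1 (k - 1), t (m + j - 1) (n + 1 - j) := by
    intro n
    induction n with
    | zero =>
      intro m x
      have ht0 : t m 0 = 0 := by rw [ht, hc0 (m + 1)]; ring
      rw [hBS, ht0]
      simp [hP0, Finset.Icc_self]
      ring
    | succ n ih =>
      intro m x
      rw [hBS, ih (m + 1) x, Finset.mul_sum, ← Finset.Ico_add_one_right_eq_Icc, ← Finset.Ico_add_one_right_eq_Icc, Finset.sum_Ico_eq_sum_range,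
        Finset.sum_Ico_eq_sum_range]
      simp only [Nat.succ_sub_one, Nat.add_sub_cancel]
      conv_rhs => rw [Finset.sum_range_succ']
      rw [add_comm (s m (n + 1) * (1 - x ^ 2) * P (m + 1) (n + 1) x ^ 2)]
      congr 1
      · apply Finset.sum_congr rfl
        intro i hi
        simp only [Finset.mem_range] at hi
        rw [← Finset.Ico_add_one_right_eq_Icc, ← Finset.Ico_add_one_right_eq_Icc, Finset.prod_Ico_eq_prod_range,
          Finset.prod_Ico_eq_prod_range]
        simp only [Nat.add_sub_cancel]
        rw [show 1 + i - 1 = i from by omega, show 1 + (i + 1) - 1 = i + 1 from by omega]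
        conv_rhs => rw [Finset.prod_range_succ']
        have e1 : m + 1 + (1 + i) = m + (1 + (i + 1)) := by omega
        have e2 : n + 1 - (1 + i) = n + 1 + 1 - (1 + (i + 1)) := by omega
        have e3 : m + 1 + (1 + i) - 1 = m + (1 + (i + 1)) - 1 := by omega
        rw [e1, e2]
        have hprod : ∀ l ∈ Finset.range i,
            t (m + 1 + (1 + l) - 1) (n + 1 - (1 + l)) =
            t (m + (1 + (l + 1)) - 1) (n + 1 + 1 - (1 + (l + 1))) := by
          intro l hl
          simp only [Finset.mem_range] at hl
          congr 1 <;> omega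
        rw [Finset.prod_congr rfl hprod]
        have e4 : m + (1 + 0) - 1 = m := by omega
        have e5 : n + 1 + 1 - (1 + 0) = n + 1 := by omega
        rw [e4, e5]
        ring
      · rw [Finset.Icc_eq_empty (by omega)]
        simp
        ring
  intro n hn m x
  obtain ⟨n', rfl⟩ : ∃ n', n = n' + 1 := ⟨n - 1, by omega⟩
  exact key n' m x
end

section
/- Let μ be as in the iterated chain sequence setup and suppose c_{m+1,n} ≤ c_{m,n+1} for all m ≥ 0 and n ≥ 1. Then c_{m+1,n} ≤ 1/2 for all m ≥ 0, n ≥ 1, and a_{m,n+1}·c_{m,n+1} ≥ a_{m+1,n}·c_{m+1,n} for all m ≥ 0, n ≥ 1. -/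
/-- Key step in Corollary 2.7: if `c_{m+1,n} ≤ c_{m,n+1}` for all `m ≥ 0`, `n ≥ 1`,
then `c_{m+1,n} ≤ 1/2` and `a_{m,n+1} c_{m,n+1} ≥ a_{m+1,n} c_{m+1,n}`. -/
theorem chain_sequence_monotone
    (c : ℕ → ℕ → ℝ) (hc0 : ∀ m, c m 0 = 0)
    (hc : ∀ m n, 1 ≤ n → c m n ∈ Set.Ioo (0 : ℝ) 1)
    (hrec : ∀ m n, 1 ≤ n →
      (1 - c m (n + 1)) * c m n = c (m + 1) n * (1 - c (m + 1) (n - 1)))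
    (hmono : ∀ m n, 1 ≤ n → c (m + 1) n ≤ c m (n + 1)) :
    (∀ m n, 1 ≤ n → c (m + 1) n ≤ 1 / 2) ∧
    (∀ m n, 1 ≤ n →
      (1 - c m (n + 1)) * c m (n + 1) ≥ (1 - c (m + 1) n) * c (m + 1) n) := by
  have key : ∀ n, 1 ≤ n → ∀ m, c (m + 1) n < 1 - c m (n + 1) := by
    intro n
    induction n with
    | zero => intro h; omega
    | succ k ih =>
      intro _ m
      have hrec' := hrec m (k + 1) (by omega)
      simp only [Nat.add_sub_cancel] at hrec'
      have h1 : c m (k + 1) < 1 - c (m + 1) k := by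
        rcases Nat.eq_zero_or_pos k with hk | hk
        · subst hk
          have := (hc m 1 le_rfl).2
          simpa [hc0] using this
        · have := ih hk m
          linarith
      have h2 : (0:ℝ) < 1 - c (m + 1) k := by
        rcases Nat.eq_zero_or_pos k with hk | hk
        · simp [hk, hc0]
        · have := (hc (m + 1) k hk).2; linarith
      have h3 : (0:ℝ) < c m (k + 1) := (hc m (k + 1) (by omega)).1
      have h4 : c (m + 1) (k + 1) ≤ c m (k + 2) := hmono m (k + 1) (by omega)
      have h5 : (0:ℝ) < c (m + 1) (k + 1) := (hc (m + 1) (k + 1) (by omega)).1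
      -- (1 - c m (k+2)) * c m (k+1) = c (m+1) (k+1) * (1 - c (m+1) k)
      nlinarith [mul_pos h5 h2]
  constructor
  · intro m n hn
    have h1 := key n hn m
    have h2 := hmono m n hn
    linarith
  · intro m n hn
    have h1 := key n hn m
    have h2 := hmono m n hn
    have h3 := (hc (m + 1) n hn).1
    nlinarith
end

section
/- For the generalized Chebyshev polynomials with parameters α, β > -1, one has c_2 - c_1/(1 + c_1) = -β(α+β+2)/((α+β+3)(α+2β+3)). Consequently, if β > 0 then c_2 < c_1/(1 + c_1) and the Turán determinant Δ_2(x) is negative for x ∈ (-1,1) sufficiently close to 1. -/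
set_option maxHeartbeats 1000000 in
/-- For the generalized Chebyshev polynomials with `α, β > -1`,
`c_2 - c_1/(1+c_1) = -β(α+β+2)/((α+β+3)(α+2β+3))`; consequently, if `β > 0`
then `Δ_2(x) < 0` for `x ∈ (-1,1)` sufficiently close to `1`. -/
theorem genCheb_c2_formula
    (α β : ℝ) (hα : -1 < α) (hβ : -1 < β)
    (c : ℕ → ℝ) (hc0 : c 0 = 0)
    (hodd : ∀ n : ℕ, 1 ≤ n → c (2 * n - 1) = ((n : ℝ) + β) / (2 * (n : ℝ) + α + β))
    (heven : ∀ n : ℕ, 1 ≤ n → c (2 * n) = (n : ℝ) / (2 * (n : ℝ) + α + β + 1))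
    (P : ℕ → ℝ → ℝ) (hP0 : ∀ x, P 0 x = 1)
    (hrec : ∀ n x, x * P n x = (1 - c n) * P (n + 1) x + c n * P (n - 1) x) :
    c 2 - c 1 / (1 + c 1) = -β * (α + β + 2) / ((α + β + 3) * (α + 2 * β + 3)) ∧
    (0 < β → ∃ δ > (0 : ℝ), ∀ x : ℝ, 1 - δ < x → x < 1 →
      P 2 x ^ 2 - P 3 x * P 1 x < 0) := by
  have hd1 : (0:ℝ) < 2 + α + β := by linarith
  have hd2 : (0:ℝ) < 3 + α + β := by linarith
  have hd3 : (0:ℝ) < 3 + α + 2 * β := by linarith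
  have hc1 : c 1 = (1 + β) / (2 + α + β) := by
    have h := hodd 1 le_rfl
    norm_num at h
    rw [h]
  have hc2 : c 2 = 1 / (3 + α + β) := by
    have h := heven 1 le_rfl
    norm_num at h
    rw [h]
    ring_nf
  have hc1pos : 0 < c 1 := by
    rw [hc1]; exact div_pos (by linarith) hd1
  have hc1lt : c 1 < 1 := by
    rw [hc1, div_lt_one hd1]; linarith
  have hc2pos : 0 < c 2 := by
    rw [hc2]; positivity
  have hc2lt : c 2 < 1 := by
    rw [hc2, div_lt_one hd2]; linarith
  have h1c1 : (0:ℝ) < 1 + c 1 := by linarith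
  have h1 : 1 + c 1 = (3 + α + 2 * β) / (2 + α + β) := by
    rw [hc1]; field_simp; ring
  have h2 : c 1 / (1 + c 1) = (1 + β) / (3 + α + 2 * β) := by
    rw [h1, hc1]
    rw [div_div_div_eq]
    rw [div_eq_div_iff (by positivity) (ne_of_gt hd3)]
    ring
  have key : c 2 - c 1 / (1 + c 1) = -β * (α + β + 2) / ((α + β + 3) * (α + 2 * β + 3)) := by
    rw [hc2, h2]
    rw [div_sub_div _ _ (ne_of_gt hd2) (ne_of_gt hd3), div_eq_div_iff (by positivity) (by nlinarith)]
    ring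
  refine ⟨key, fun hβ' => ?_⟩
  have hP1 : ∀ x, P 1 x = x := by
    intro x
    have h := hrec 0 x
    simp [hc0, hP0] at h
    linarith
  have ha1 : (0:ℝ) < 1 - c 1 := by linarith
  have ha2 : (0:ℝ) < 1 - c 2 := by linarith
  have hP2 : ∀ x, P 2 x = (x ^ 2 - c 1) / (1 - c 1) := by
    intro x
    have h := hrec 1 x
    rw [hP1, hP0] at h
    field_simp
    nlinarith [h]
  have hP3 : ∀ x, P 3 x = (x * P 2 x - c 2 * x) / (1 - c 2) := by
    intro x
    have h := hrec 2 x
    rw [hP1] at h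
    field_simp
    nlinarith [h]
  set c1 := c 1 with hc1'
  set c2 := c 2 with hc2'
  clear_value c1 c2
  set K : ℝ := (1 - c1) * ((1 + c1) * c2 - c1) with hK
  clear_value K
  have hKneg : K < 0 := by
    have h2' : c2 - c1 / (1 + c1) < 0 := by
      rw [key]
      apply div_neg_of_neg_of_pos
      · nlinarith
      · nlinarith
    have h3 : (1 + c1) * c2 - c1 < 0 := by
      have hm := mul_neg_of_pos_of_neg h1c1 h2'
      have heq : (1 + c1) * (c2 - c1 / (1 + c1)) = (1 + c1) * c2 - c1 := by
        field_simp
      linarith [heq ▸ hm]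
    rw [hK]
    exact mul_neg_of_pos_of_neg ha1 h3
  set M : ℝ := |(1 - c2) - (1 - c1)| + 1 with hM
  clear_value M
  have hMpos : (0:ℝ) < M := by rw [hM]; positivity
  have hδ2pos : (0:ℝ) < -K / (4 * M) := div_pos (by linarith) (by linarith)
  set δ : ℝ := min (1/2) (-K / (4 * M)) with hδ
  clear_value δ
  have hδpos : 0 < δ := by rw [hδ]; exact lt_min (by norm_num) hδ2pos
  have hδle1 : δ ≤ 1/2 := by rw [hδ]; exact min_le_left _ _
  have hδle2 : δ ≤ -K / (4 * M) := by rw [hδ]; exact min_le_right _ _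
  refine ⟨δ, hδpos, ?_⟩
  intro x hx1 hx2
  have hxpos : (0:ℝ) < x := by linarith
  set t : ℝ := 1 - x ^ 2 with ht
  clear_value t
  have htpos : 0 < t := by nlinarith
  have htsmall : t < -K / (2 * M) := by
    have h1x : 1 - x < δ := by linarith
    have h5 : t < 2 * (1 - x) := by nlinarith
    have h6 : 2 * (-K / (4 * M)) = -K / (2 * M) := by
      field_simp
      ring
    linarith [h5, h1x, hδle2, h6]
  have hbracket : ((1 - c2) - (1 - c1)) * t + K < 0 := by
    have hb1 : ((1 - c2) - (1 - c1)) * t ≤ M * t := by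
      apply mul_le_mul_of_nonneg_right _ htpos.le
      calc (1 - c2) - (1 - c1) ≤ |(1 - c2) - (1 - c1)| := le_abs_self _
        _ ≤ M := by rw [hM]; linarith
    have hb2 : M * t < M * (-K / (2 * M)) := mul_lt_mul_of_pos_left htsmall hMpos
    have hb3 : M * (-K / (2 * M)) = -K / 2 := by
      field_simp
    linarith [hb1, hb2, hb3, hKneg]
  have e3 : P 3 x = (x * ((x ^ 2 - c1) / (1 - c1)) - c2 * x) / (1 - c2) := by
    rw [hP3, hP2]
  have hdelta : P 2 x ^ 2 - P 3 x * P 1 x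
      = (((1 - c2) - (1 - c1)) * t + K) * t / ((1 - c1) ^ 2 * (1 - c2)) := by
    rw [e3, hP2, hP1, ht, hK]
    field_simp
    ring
  rw [hdelta]
  apply div_neg_of_neg_of_pos
  · exact mul_neg_of_neg_of_pos hbracket htpos
  · positivity
end

section
/- For the generalized Chebyshev recurrence coefficients with α > -1, β ∈ (-1, 0], setting A_n := c_n·(a_{n+2} - c_{n+2}), B_n := (a_n - c_{n+2})·c_{n+1}, C_n := (a_n - c_n)·c_{n+2}, one has: A_{2n-1} = (α-β)(n+β)/((2n+α+β)(2n+α+β+2)), B_{2n-1} = (α-β)n/((2n+α+β)(2n+α+β+2)), C_{2n-1} = (α-β)(n+β+1)/((2n+α+β)(2n+α+β+2)), A_{2n} = (α+β+1)n/((2n+α+β+1)(2n+α+β+3)), B_{2n} = (α+β+1)(n+β+1)/((2n+α+β+1)(2n+α+β+3)), C_{2n} = (α+β+1)(n+1)/((2n+α+β+1)(2n+α+β+3)) for all n ≥ 1; and in each case either 0 ≤ A_n ≤ B_n ≤ C_n or 0 ≥ A_n ≥ B_n ≥ C_n holds. -/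
lemma genCheb_key
    (α β : ℝ) (hα : -1 < α) (hβ : β ∈ Set.Ioc (-1 : ℝ) 0)
    (c : ℕ → ℝ)
    (hodd : ∀ n : ℕ, 1 ≤ n → c (2 * n - 1) = ((n : ℝ) + β) / (2 * (n : ℝ) + α + β))
    (heven : ∀ n : ℕ, 1 ≤ n → c (2 * n) = (n : ℝ) / (2 * (n : ℝ) + α + β + 1))
    (n : ℕ) (hn : 1 ≤ n) :
      turanA c (2 * n - 1) =
        (α - β) * ((n : ℝ) + β) / ((2 * (n : ℝ) + α + β) * (2 * (n : ℝ) + α + β + 2)) ∧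
      turanB c (2 * n - 1) =
        (α - β) * (n : ℝ) / ((2 * (n : ℝ) + α + β) * (2 * (n : ℝ) + α + β + 2)) ∧
      turanC c (2 * n - 1) =
        (α - β) * ((n : ℝ) + β + 1) / ((2 * (n : ℝ) + α + β) * (2 * (n : ℝ) + α + β + 2)) ∧
      turanA c (2 * n) =
        (α + β + 1) * (n : ℝ) / ((2 * (n : ℝ) + α + β + 1) * (2 * (n : ℝ) + α + β + 3)) ∧
      turanB c (2 * n) =
        (α + β + 1) * ((n : ℝ) + β + 1) /
          ((2 * (n : ℝ) + α + β + 1) * (2 * (n : ℝ) + α + β + 3)) ∧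
      turanC c (2 * n) =
        (α + β + 1) * ((n : ℝ) + 1) /
          ((2 * (n : ℝ) + α + β + 1) * (2 * (n : ℝ) + α + β + 3)) := by
  obtain ⟨m, rfl⟩ : ∃ m, n = m + 1 := ⟨n - 1, by omega⟩
  have h1 := hodd (m + 1) (by omega)
  have h2 := hodd (m + 2) (by omega)
  have h3 := heven (m + 1) (by omega)
  have h4 := heven (m + 2) (by omega)
  have e1 : 2 * (m + 1) - 1 = 2 * m + 1 := by omega
  have e2 : 2 * (m + 2) - 1 = 2 * m + 3 := by omega
  have e3 : 2 * (m + 1) = 2 * m + 2 := by omega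
  have e4 : 2 * (m + 2) = 2 * m + 4 := by omega
  rw [e1] at h1; rw [e2] at h2; rw [e3] at h3; rw [e4] at h4
  push_cast at h1 h2 h3 h4
  have hmr : (0:ℝ) ≤ (m:ℝ) := Nat.cast_nonneg m
  have d1 : (0:ℝ) < 2 * ((m:ℝ) + 1) + α + β := by nlinarith [hβ.1]
  have d2 : (0:ℝ) < 2 * ((m:ℝ) + 1) + α + β + 1 := by linarith
  have d3 : (0:ℝ) < 2 * ((m:ℝ) + 1) + α + β + 2 := by linarith
  have d4 : (0:ℝ) < 2 * ((m:ℝ) + 1) + α + β + 3 := by linarith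
  have n1 : 2 * ((m:ℝ) + 1) + α + β ≠ 0 := d1.ne'
  have n2 : 2 * ((m:ℝ) + 1) + α + β + 1 ≠ 0 := d2.ne'
  have n3 : 2 * ((m:ℝ) + 2) + α + β ≠ 0 := by intro h; nlinarith
  have n4 : 2 * ((m:ℝ) + 2) + α + β + 1 ≠ 0 := by intro h; nlinarith
  simp only [turanA, turanB, turanC, e1, e3]
  have i0 : 2 * m + 2 - 1 = 2 * m + 1 := by omega
  have i1 : 2 * m + 1 + 2 = 2 * m + 3 := by omega
  have i2 : 2 * m + 2 + 2 = 2 * m + 4 := by omega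
  have i3 : 2 * m + 1 + 1 = 2 * m + 2 := by omega
  rw [i0, i1, i2, i3, h1, h2, h3, h4]
  push_cast
  have a1 : ((m:ℝ) + 1) * 2 + α + β ≠ 0 := by intro h; linarith
  have a2 : ((m:ℝ) + 1) * 2 + α + β + 1 ≠ 0 := by intro h; linarith
  have a3 : ((m:ℝ) + 1) * 2 + α + β + 2 ≠ 0 := by intro h; linarith
  have a4 : ((m:ℝ) + 1) * 2 + α + β + 3 ≠ 0 := by intro h; linarith
  have b1 : ((m:ℝ) + 2) * 2 + α + β ≠ 0 := by intro h; linarith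
  have b2 : ((m:ℝ) + 2) * 2 + α + β + 1 ≠ 0 := by intro h; linarith
  refine ⟨?_, ?_, ?_, ?_, ?_, ?_⟩ <;> (field_simp; ring)

set_option maxHeartbeats 1000000 in
/-- Explicit formulas for `A_n, B_n, C_n` for the generalized Chebyshev recurrence
coefficients with `α > -1`, `β ∈ (-1,0]`, and verification of the alternatives of
Theorem 2.2. -/
theorem genCheb_ABC_formulas
    (α β : ℝ) (hα : -1 < α) (hβ : β ∈ Set.Ioc (-1 : ℝ) 0)
    (c : ℕ → ℝ) (hc0 : c 0 = 0)
    (hodd : ∀ n : ℕ, 1 ≤ n → c (2 * n - 1) = ((n : ℝ) + β) / (2 * (n : ℝ) + α + β))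
    (heven : ∀ n : ℕ, 1 ≤ n → c (2 * n) = (n : ℝ) / (2 * (n : ℝ) + α + β + 1)) :
    (∀ n : ℕ, 1 ≤ n →
      turanA c (2 * n - 1) =
        (α - β) * ((n : ℝ) + β) / ((2 * (n : ℝ) + α + β) * (2 * (n : ℝ) + α + β + 2)) ∧
      turanB c (2 * n - 1) =
        (α - β) * (n : ℝ) / ((2 * (n : ℝ) + α + β) * (2 * (n : ℝ) + α + β + 2)) ∧
      turanC c (2 * n - 1) =
        (α - β) * ((n : ℝ) + β + 1) / ((2 * (n : ℝ) + α + β) * (2 * (n : ℝ) + α + β + 2)) ∧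
      turanA c (2 * n) =
        (α + β + 1) * (n : ℝ) / ((2 * (n : ℝ) + α + β + 1) * (2 * (n : ℝ) + α + β + 3)) ∧
      turanB c (2 * n) =
        (α + β + 1) * ((n : ℝ) + β + 1) /
          ((2 * (n : ℝ) + α + β + 1) * (2 * (n : ℝ) + α + β + 3)) ∧
      turanC c (2 * n) =
        (α + β + 1) * ((n : ℝ) + 1) /
          ((2 * (n : ℝ) + α + β + 1) * (2 * (n : ℝ) + α + β + 3))) ∧
    (∀ n : ℕ, 1 ≤ n →
      (0 ≤ turanA c n ∧ turanA c n ≤ turanB c n ∧ turanB c n ≤ turanC c n) ∨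
      (0 ≥ turanA c n ∧ turanA c n ≥ turanB c n ∧ turanB c n ≥ turanC c n)) := by
  refine ⟨fun n hn => genCheb_key α β hα hβ c hodd heven n hn, fun n hn => ?_⟩
  rcases Nat.even_or_odd n with ⟨m, hmeq⟩ | ⟨m, hmeq⟩
  · -- n = 2m, m ≥ 1
    have hm1 : 1 ≤ m := by omega
    obtain ⟨_, _, _, hA, hB, hC⟩ := genCheb_key α β hα hβ c hodd heven m hm1
    have hn2 : n = 2 * m := by omega
    rw [hn2, hA, hB, hC]
    have hmr : (1:ℝ) ≤ (m:ℝ) := by exact_mod_cast hm1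
    have d2 : (0:ℝ) < 2 * (m:ℝ) + α + β + 1 := by nlinarith [hβ.1]
    have d4 : (0:ℝ) < 2 * (m:ℝ) + α + β + 3 := by linarith
    have hD : (0:ℝ) < (2 * (m:ℝ) + α + β + 1) * (2 * (m:ℝ) + α + β + 3) := by positivity
    rcases le_or_gt 0 (α + β + 1) with hs | hs
    · left
      refine ⟨div_nonneg (mul_nonneg hs (by linarith)) hD.le, ?_, ?_⟩
      · apply (div_le_div_iff_of_pos_right hD).mpr
        nlinarith [mul_nonneg hs (by linarith [hβ.1] : (0:ℝ) ≤ β + 1)]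
      · apply (div_le_div_iff_of_pos_right hD).mpr
        nlinarith [mul_nonneg hs (by linarith [hβ.2] : (0:ℝ) ≤ -β)]
    · right
      refine ⟨div_nonpos_of_nonpos_of_nonneg (mul_nonpos_of_nonpos_of_nonneg hs.le (by linarith)) hD.le, ?_, ?_⟩
      · apply (div_le_div_iff_of_pos_right hD).mpr
        nlinarith [mul_nonneg (by linarith : (0:ℝ) ≤ -(α + β + 1)) (by linarith [hβ.1] : (0:ℝ) ≤ β + 1)]
      · apply (div_le_div_iff_of_pos_right hD).mpr
        nlinarith [mul_nonneg (by linarith : (0:ℝ) ≤ -(α + β + 1)) (by linarith [hβ.2] : (0:ℝ) ≤ -β)]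
  · -- n = 2m+1 = 2(m+1)-1
    obtain ⟨hA, hB, hC, _, _, _⟩ := genCheb_key α β hα hβ c hodd heven (m + 1) (by omega)
    have hn2 : n = 2 * (m + 1) - 1 := by omega
    rw [hn2, hA, hB, hC]
    push_cast
    have hmr : (0:ℝ) ≤ (m:ℝ) := Nat.cast_nonneg m
    have d2 : (0:ℝ) < 2 * ((m:ℝ) + 1) + α + β := by nlinarith [hβ.1]
    have d4 : (0:ℝ) < 2 * ((m:ℝ) + 1) + α + β + 2 := by linarith
    have hD : (0:ℝ) < (2 * ((m:ℝ) + 1) + α + β) * (2 * ((m:ℝ) + 1) + α + β + 2) := by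
      positivity
    rcases le_or_gt 0 (α - β) with hs | hs
    · left
      refine ⟨div_nonneg (mul_nonneg hs (by linarith [hβ.1])) hD.le, ?_, ?_⟩
      · apply (div_le_div_iff_of_pos_right hD).mpr
        nlinarith [mul_nonneg hs (by linarith [hβ.2] : (0:ℝ) ≤ -β)]
      · apply (div_le_div_iff_of_pos_right hD).mpr
        nlinarith [mul_nonneg hs (by linarith [hβ.1] : (0:ℝ) ≤ β + 1)]
    · right
      refine ⟨div_nonpos_of_nonpos_of_nonneg (mul_nonpos_of_nonpos_of_nonneg hs.le (by linarith [hβ.1])) hD.le, ?_, ?_⟩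
      · apply (div_le_div_iff_of_pos_right hD).mpr
        nlinarith [mul_nonneg (by linarith : (0:ℝ) ≤ -(α - β)) (by linarith [hβ.2] : (0:ℝ) ≤ -β)]
      · apply (div_le_div_iff_of_pos_right hD).mpr
        nlinarith [mul_nonneg (by linarith : (0:ℝ) ≤ -(α - β)) (by linarith [hβ.1] : (0:ℝ) ≤ β + 1)]
end

section
/- For the generalized Chebyshev polynomials with α > -1 and β ∈ (-1, 0], for every n ≥ 1 and all real x: Δ_{2n+1}(x) = n(n+β)/((n+α+1)(n+α+β+1))·Δ_{2n-1}(x) + (β+1)(2n+α+β+1)/((n+α+1)(n+α+β+1))·(1-x^2)·P_{2n}(x)^2 + (-β)n(2n+α+β+1)/((n+α+1)(n+α+β+1)^2)·(x·P_{2n}(x) - P_{2n-1}(x))^2, where P_n := T_n^{(α,β)}. -/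
set_option maxHeartbeats 1000000 in
/-- Recursive nonnegative decomposition of `Δ_{2n+1}` for generalized
Chebyshev polynomials with `α > -1`, `β ∈ (-1,0]`. -/
theorem genCheb_odd_recursion
    (α β : ℝ) (hα : -1 < α) (hβ : β ∈ Set.Ioc (-1 : ℝ) 0)
    (c : ℕ → ℝ) (hc0 : c 0 = 0)
    (hodd : ∀ n : ℕ, 1 ≤ n → c (2 * n - 1) = ((n : ℝ) + β) / (2 * (n : ℝ) + α + β))
    (heven : ∀ n : ℕ, 1 ≤ n → c (2 * n) = (n : ℝ) / (2 * (n : ℝ) + α + β + 1))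
    (P : ℕ → ℝ → ℝ) (hP0 : ∀ x, P 0 x = 1)
    (hrec : ∀ n x, x * P n x = (1 - c n) * P (n + 1) x + c n * P (n - 1) x) :
    ∀ n : ℕ, 1 ≤ n → ∀ x : ℝ,
      P (2 * n + 1) x ^ 2 - P (2 * n + 2) x * P (2 * n) x =
        (n : ℝ) * ((n : ℝ) + β) / (((n : ℝ) + α + 1) * ((n : ℝ) + α + β + 1)) *
          (P (2 * n - 1) x ^ 2 - P (2 * n) x * P (2 * n - 2) x) +
        (β + 1) * (2 * (n : ℝ) + α + β + 1) /
            (((n : ℝ) + α + 1) * ((n : ℝ) + α + β + 1)) *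
          ((1 - x ^ 2) * P (2 * n) x ^ 2) +
        (-β) * (n : ℝ) * (2 * (n : ℝ) + α + β + 1) /
            (((n : ℝ) + α + 1) * ((n : ℝ) + α + β + 1) ^ 2) *
          (x * P (2 * n) x - P (2 * n - 1) x) ^ 2 := by
  obtain ⟨hβ1, hβ0⟩ := hβ
  rintro n hn x
  obtain ⟨m, rfl⟩ : ∃ m, n = m + 1 := ⟨n - 1, by omega⟩
  set M : ℝ := (m : ℝ) with hM
  have hM0 : (0:ℝ) ≤ M := Nat.cast_nonneg m
  have hpos1 : (0:ℝ) < M + β + 1 := by linarith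
  have hpos2 : (0:ℝ) < M + α + 1 := by linarith
  have hpos3 : (0:ℝ) < M + α + 2 := by linarith
  have hpos4 : (0:ℝ) < M + α + β + 2 := by linarith
  have hd2 : (0:ℝ) < 2*M + α + β + 2 := by linarith
  have hd3 : (0:ℝ) < 2*M + α + β + 3 := by linarith
  have hd4 : (0:ℝ) < 2*M + α + β + 4 := by linarith
  -- coefficient values
  have hc1 : c (2*m+1) = (M + 1 + β) / (2*M + α + β + 2) := by
    have := hodd (m+1) (by omega)
    have he : 2*(m+1) - 1 = 2*m+1 := by omega
    rw [he] at this
    rw [this, hM]; push_cast; ring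
  have hc2 : c (2*m+2) = (M + 1) / (2*M + α + β + 3) := by
    have := heven (m+1) (by omega)
    have he : 2*(m+1) = 2*m+2 := by omega
    rw [he] at this
    rw [this, hM]; push_cast; ring
  have hc3 : c (2*m+3) = (M + 2 + β) / (2*M + α + β + 4) := by
    have := hodd (m+2) (by omega)
    have he : 2*(m+2) - 1 = 2*m+3 := by omega
    rw [he] at this
    rw [this, hM]; push_cast; ring
  have h1 := hrec (2*m+1) x
  have h2 := hrec (2*m+2) x
  have h3 := hrec (2*m+3) x
  simp only [show 2*m+1-1 = 2*m from by omega, show 2*m+2-1 = 2*m+1 from by omega,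
    show 2*m+3-1 = 2*m+2 from by omega, show 2*m+1+1 = 2*m+2 from by omega,
    show 2*m+2+1 = 2*m+3 from by omega, show 2*m+3+1 = 2*m+4 from by omega,
    hc1, hc2, hc3] at h1 h2 h3
  -- division-free recurrences
  have H1 : (M+β+1) * P (2*m) x
      = (2*M+α+β+2)*x*(P (2*m+1) x) - (M+α+1)*(P (2*m+2) x) := by
    have e := div_mul_cancel₀ (M+1+β) (ne_of_gt hd2)
    linear_combination (-(2*M+α+β+2)) * h1 + (P (2*m+2) x - P (2*m) x) * e
  have H2 : (M+α+β+2) * P (2*m+3) x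
      = (2*M+α+β+3)*x*(P (2*m+2) x) - (M+1)*(P (2*m+1) x) := by
    have e := div_mul_cancel₀ (M+1) (ne_of_gt hd3)
    linear_combination (-(2*M+α+β+3)) * h2 + (P (2*m+1+2) x - P (2*m+1) x) * e
  have H3 : (M+α+2) * P (2*m+4) x
      = (2*M+α+β+4)*x*(P (2*m+3) x) - (M+β+2)*(P (2*m+2) x) := by
    have e := div_mul_cancel₀ (M+2+β) (ne_of_gt hd4)
    linear_combination (-(2*M+α+β+4)) * h3 + (P (2*m+2+2) x - P (2*m+2) x) * e
  simp only [show 2*(m+1)+1 = 2*m+3 from by omega, show 2*(m+1)+2 = 2*m+4 from by omega,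
    show 2*(m+1) = 2*m+2 from by omega, show 2*(m+1)-1 = 2*m+1 from by omega,
    show 2*(m+1)-2 = 2*m from by omega, show 2*m+2+1 = 2*m+3 from by omega,
    show 2*m+2+2 = 2*m+4 from by omega, show 2*m+2-1 = 2*m+1 from by omega,
    show 2*m+2-2 = 2*m from by omega]
  push_cast
  rw [show M + 1 + α + 1 = M + α + 2 from by ring,
      show M + 1 + α + β + 1 = M + α + β + 2 from by ring]
  have hne1 : M + β + 1 ≠ 0 := ne_of_gt hpos1
  have hne2 : M + α + 2 ≠ 0 := ne_of_gt hpos3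
  have hne3 : M + α + β + 2 ≠ 0 := ne_of_gt hpos4
  have key : (P (2*m+3) x ^ 2 - P (2*m+4) x * P (2*m+2) x) * ((M+α+2) * (M+α+β+2)^2)
      = ((M+1) * (M+1+β) * (P (2*m+1) x ^ 2 - P (2*m+2) x * P (2*m) x)
          + (β+1) * (2*M+α+β+3) * ((1 - x^2) * P (2*m+2) x ^ 2)) * (M+α+β+2)
        - β * (M+1) * (2*M+α+β+3) * (x * P (2*m+2) x - P (2*m+1) x) ^ 2 := by
    linear_combination
      ((M+α+2) * ((M+α+β+2) * (P (2*m+3) x) + (2*M+α+β+3)*x*(P (2*m+2) x)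
          - (M+1)*(P (2*m+1) x))
        - (2*M+α+β+4)*x*(P (2*m+2) x)*(M+α+β+2)) * H2
      - (M+α+β+2)^2 * (P (2*m+2) x) * H3
      + (M+1) * (M+α+β+2) * (P (2*m+2) x) * H1
  field_simp
  linear_combination key
end

section
/- For the generalized Chebyshev polynomials with α > -1 and β ∈ (-1, 0], for every n ≥ 1 and all real x: Δ_{2n+2}(x) = n(n+β+1)/((n+α+1)(n+α+β+2))·Δ_{2n}(x) + (-β)(2n+α+β+2)/((n+α+1)(n+α+β+2))·(1-x^2)·P_{2n+1}(x)^2 + (β+1)(n+β+1)(2n+α+β+2)/((n+α+1)^2(n+α+β+2))·(x·P_{2n+1}(x) - P_{2n}(x))^2, where P_n := T_n^{(α,β)}. -/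
/-- Recursive nonnegative decomposition of `Δ_{2n+2}` for generalized
Chebyshev polynomials with `α > -1`, `β ∈ (-1,0]`. -/
theorem genCheb_even_recursion
    (α β : ℝ) (hα : -1 < α) (hβ : β ∈ Set.Ioc (-1 : ℝ) 0)
    (c : ℕ → ℝ) (hc0 : c 0 = 0)
    (hodd : ∀ n : ℕ, 1 ≤ n → c (2 * n - 1) = ((n : ℝ) + β) / (2 * (n : ℝ) + α + β))
    (heven : ∀ n : ℕ, 1 ≤ n → c (2 * n) = (n : ℝ) / (2 * (n : ℝ) + α + β + 1))
    (P : ℕ → ℝ → ℝ) (hP0 : ∀ x, P 0 x = 1)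
    (hrec : ∀ n x, x * P n x = (1 - c n) * P (n + 1) x + c n * P (n - 1) x) :
    ∀ n : ℕ, 1 ≤ n → ∀ x : ℝ,
      P (2 * n + 2) x ^ 2 - P (2 * n + 3) x * P (2 * n + 1) x =
        (n : ℝ) * ((n : ℝ) + β + 1) / (((n : ℝ) + α + 1) * ((n : ℝ) + α + β + 2)) *
          (P (2 * n) x ^ 2 - P (2 * n + 1) x * P (2 * n - 1) x) +
        (-β) * (2 * (n : ℝ) + α + β + 2) /
            (((n : ℝ) + α + 1) * ((n : ℝ) + α + β + 2)) *
          ((1 - x ^ 2) * P (2 * n + 1) x ^ 2) +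
        (β + 1) * ((n : ℝ) + β + 1) * (2 * (n : ℝ) + α + β + 2) /
            (((n : ℝ) + α + 1) ^ 2 * ((n : ℝ) + α + β + 2)) *
          (x * P (2 * n + 1) x - P (2 * n) x) ^ 2 := by
  intro n hn x
  have hn' : (1 : ℝ) ≤ (n : ℝ) := by exact_mod_cast hn
  obtain ⟨hβ1, hβ2⟩ := hβ
  -- nonzero denominators
  have hn0 : (n : ℝ) ≠ 0 := by linarith
  have hd1 : 2 * (n : ℝ) + α + β + 1 ≠ 0 := by nlinarith
  have hd2 : 2 * (n : ℝ) + 2 + α + β ≠ 0 := by nlinarith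
  have hd3 : 2 * (n : ℝ) + α + β + 3 ≠ 0 := by nlinarith
  have hna : (n : ℝ) + 1 + α ≠ 0 := by nlinarith
  have hna' : (n : ℝ) + α + 1 ≠ 0 := by nlinarith
  have hnab : (n : ℝ) + α + β + 2 ≠ 0 := by nlinarith
  -- coefficient values
  have hce : c (2 * n) = (n : ℝ) / (2 * (n : ℝ) + α + β + 1) := heven n hn
  have hco : c (2 * n + 1) = ((n : ℝ) + 1 + β) / (2 * (n : ℝ) + 2 + α + β) := by
    have h := hodd (n + 1) (by omega)
    rw [show 2 * (n + 1) - 1 = 2 * n + 1 from by omega] at h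
    push_cast at h
    rw [h]; ring_nf
  have hce2 : c (2 * n + 2) = ((n : ℝ) + 1) / (2 * (n : ℝ) + α + β + 3) := by
    have h := heven (n + 1) (by omega)
    rw [show 2 * (n + 1) = 2 * n + 2 from by omega] at h
    push_cast at h
    rw [h]; ring_nf
  -- three instances of the recurrence
  have h1 := hrec (2 * n) x
  rw [hce] at h1
  have h2 := hrec (2 * n + 1) x
  rw [show 2 * n + 1 - 1 = 2 * n from by omega, hco,
      show 2 * n + 1 + 1 = 2 * n + 2 from by omega] at h2
  have h3 := hrec (2 * n + 2) x
  rw [show 2 * n + 2 - 1 = 2 * n + 1 from by omega, hce2,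
      show 2 * n + 2 + 1 = 2 * n + 3 from by omega] at h3
  replace h1 : x * P (2 * n) x * (2 * (n:ℝ) + α + β + 1) = ((n:ℝ) + α + β + 1) * P (2 * n + 1) x + (n:ℝ) * P (2 * n - 1) x := by
    rw [h1]
    have e : (2 * (n:ℝ) + α + β + 1)⁻¹ * (2 * (n:ℝ) + α + β + 1) = 1 := inv_mul_cancel₀ hd1
    linear_combination ((n:ℝ) * P (2 * n - 1) x - (n:ℝ) * P (2 * n + 1) x) * e
  replace h2 : x * P (2 * n + 1) x * (2 * (n:ℝ) + 2 + α + β) = ((n:ℝ) + 1 + α) * P (2 * n + 2) x + ((n:ℝ) + 1 + β) * P (2 * n) x := by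
    rw [h2]
    have e : (2 * (n:ℝ) + 2 + α + β)⁻¹ * (2 * (n:ℝ) + 2 + α + β) = 1 := inv_mul_cancel₀ hd2
    linear_combination (((n:ℝ) + 1 + β) * P (2 * n) x - ((n:ℝ) + 1 + β) * P (2 * n + 2) x) * e
  replace h3 : x * P (2 * n + 2) x * (2 * (n:ℝ) + α + β + 3) = ((n:ℝ) + α + β + 2) * P (2 * n + 3) x + ((n:ℝ) + 1) * P (2 * n + 1) x := by
    rw [h3]
    have e : (2 * (n:ℝ) + α + β + 3)⁻¹ * (2 * (n:ℝ) + α + β + 3) = 1 := inv_mul_cancel₀ hd3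
    linear_combination (((n:ℝ) + 1) * P (2 * n + 1) x - ((n:ℝ) + 1) * P (2 * n + 3) x) * e
  field_simp
  apply mul_left_cancel₀ (mul_ne_zero hna' hnab)
  linear_combination
    (-(((n:ℝ)+β+1) * ((n:ℝ)+α+1)^2 * ((n:ℝ)+α+β+2) * P (2*n+1) x)) * h1 +
    (-(((n:ℝ)+α+1)^2 * ((n:ℝ)+α+β+2)^2 * P (2*n+2) x)
      + ((n:ℝ)+α+1) * ((n:ℝ)+α+β+2)^2 * ((n:ℝ)+β+1) * P (2*n) x
      - ((n:ℝ)+α+1) * ((n:ℝ)+α+β+2) * (β * (2*(n:ℝ)+α+β+3) + (n:ℝ)+1) * (x * P (2*n+1) x)) * h2 +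
    (((n:ℝ)+α+1)^3 * ((n:ℝ)+α+β+2) * P (2*n+1) x) * h3
end

section
/- For the generalized Chebyshev polynomials T_n^{(α,β)} with α, β > -1, the Turán inequality Δ_n(x) ≥ 0 for all n ≥ 1 and x ∈ [-1,1] holds if and only if β ≤ 0. -/
/-- Key algebraic identity behind the Turán inequality for generalized
Chebyshev polynomials. -/
lemma genCheb_turan_key (e c d μ x p q r s : ℝ)
    (h1 : x * q = (1 - c) * r + c * p)
    (h2 : x * r = (1 - d) * s + d * q)
    (hcons : μ * (1 - 2 * e) = c * (1 - c) * (1 - 2 * d)) :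
    (1 - c) ^ 2 * (1 - d) * (r ^ 2 - s * q)
      = μ * (e * p ^ 2 - x * p * q + (1 - e) * q ^ 2)
        + (d * (1 - c) ^ 2 - μ * (1 - e)) * (1 - x ^ 2) * q ^ 2
        + (c ^ 2 * (1 - d) - μ * e) * (p - x * q) ^ 2 := by
  linear_combination
    (-((1 - c) * (1 - d)) * r + ((1 - c) - (1 - d)) * x * q + (1 - d) * c * p) * h1
    + ((1 - c) ^ 2 * q) * h2
    + (x * q * (p - x * q)) * hcons

/-- One induction step: nonnegativity of the Turán determinant propagates
two steps via the square decomposition. -/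
lemma genCheb_turan_step (e c d μ x p q r s : ℝ)
    (h1 : x * q = (1 - c) * r + c * p)
    (h2 : x * r = (1 - d) * s + d * q)
    (hcons : μ * (1 - 2 * e) = c * (1 - c) * (1 - 2 * d))
    (ha : 0 < 1 - c) (hb : 0 < 1 - d)
    (hgq : 0 ≤ d * (1 - c) ^ 2 - μ * (1 - e))
    (hgp : 0 ≤ c ^ 2 * (1 - d) - μ * e)
    (hMV : 0 ≤ μ * (e * p ^ 2 - x * p * q + (1 - e) * q ^ 2))
    (hx2 : x ^ 2 ≤ 1) :
    0 ≤ r ^ 2 - s * q := by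
  have key := genCheb_turan_key e c d μ x p q r s h1 h2 hcons
  have hK : 0 < (1 - c) ^ 2 * (1 - d) := by positivity
  have hRHS : 0 ≤ (1 - c) ^ 2 * (1 - d) * (r ^ 2 - s * q) := by
    rw [key]
    have t2 : 0 ≤ (d * (1 - c) ^ 2 - μ * (1 - e)) * (1 - x ^ 2) * q ^ 2 := by
      apply mul_nonneg (mul_nonneg hgq (by linarith)) (sq_nonneg q)
    have t3 : 0 ≤ (c ^ 2 * (1 - d) - μ * e) * (p - x * q) ^ 2 :=
      mul_nonneg hgp (sq_nonneg _)
    linarith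
  exact nonneg_of_mul_nonneg_right hRHS hK

/-- The odd-index induction step with explicit coefficients. -/
lemma genCheb_step_odd (α β : ℝ) (hα : -1 < α) (hβ : -1 < β) (hβ0 : β ≤ 0)
    (m : ℝ) (hm : 1 ≤ m) (x p q r s o : ℝ)
    (hrecm1 : x * p = (1 - (m + β) / (2 * m + α + β)) * q
        + (m + β) / (2 * m + α + β) * o)
    (h1 : x * q = (1 - m / (2 * m + α + β + 1)) * r
        + m / (2 * m + α + β + 1) * p)
    (h2 : x * r = (1 - (m + 1 + β) / (2 * m + 2 + α + β)) * s
        + (m + 1 + β) / (2 * m + 2 + α + β) * q)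
    (hΔ : 0 ≤ p ^ 2 - q * o) (hx2 : x ^ 2 ≤ 1) :
    0 ≤ r ^ 2 - s * q := by
  have hK : (0:ℝ) < 2 * m + α + β := by linarith
  have hK1 : (0:ℝ) < 2 * m + α + β + 1 := by linarith
  have hK2 : (0:ℝ) < 2 * m + 2 + α + β := by linarith
  set e := (m + β) / (2 * m + α + β) with he_def
  set cc := m / (2 * m + α + β + 1) with hcc_def
  set d := (m + 1 + β) / (2 * m + 2 + α + β) with hd_def
  set μ := m / (2 * m + α + β + 1) * (1 - m / (2 * m + α + β + 1))
      * ((2 * m + α + β) / (2 * m + 2 + α + β)) with hμ_def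
  have ha : 0 < 1 - cc := by
    rw [hcc_def, sub_pos, div_lt_one hK1]; linarith
  have hb : 0 < 1 - d := by
    rw [hd_def, sub_pos, div_lt_one hK2]; linarith
  have he : 0 ≤ e := div_nonneg (by linarith) hK.le
  have hcc0 : 0 ≤ cc := div_nonneg (by linarith) hK1.le
  have hμ : 0 ≤ μ := by
    rw [hμ_def]
    exact mul_nonneg (mul_nonneg hcc0 (by rw [hcc_def] at ha; linarith))
      (div_nonneg hK.le hK2.le)
  have hcons : μ * (1 - 2 * e) = cc * (1 - cc) * (1 - 2 * d) := by
    rw [hμ_def, he_def, hcc_def, hd_def]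
    obtain ⟨A, rfl⟩ : ∃ A, α = A - 2 * m - β := ⟨α + 2 * m + β, by ring⟩
    rw [show 2 * m + (A - 2 * m - β) + β = A by ring,
      show 2 * m + 2 + (A - 2 * m - β) + β = A + 2 by ring]
    have hA0 : A ≠ 0 := (show (0:ℝ) < A by linarith).ne'
    have hA1 : A + 1 ≠ 0 := (show (0:ℝ) < A + 1 by linarith).ne'
    have hA2 : A + 2 ≠ 0 := (show (0:ℝ) < A + 2 by linarith).ne'
    field_simp
    ring
  have hgq : 0 ≤ d * (1 - cc) ^ 2 - μ * (1 - e) := by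
    have heq : d * (1 - cc) ^ 2 - μ * (1 - e)
        = (m + 1 + α + β) * ((1 + β) * (2 * m + 1 + α + β))
          / ((2 * m + α + β + 1) ^ 2 * (2 * m + 2 + α + β)) := by
      rw [hμ_def, he_def, hcc_def, hd_def]
      obtain ⟨A, rfl⟩ : ∃ A, α = A - 2 * m - β := ⟨α + 2 * m + β, by ring⟩
      rw [show 2 * m + (A - 2 * m - β) + β = A by ring,
        show 2 * m + 2 + (A - 2 * m - β) + β = A + 2 by ring]
      have hA0 : A ≠ 0 := (show (0:ℝ) < A by linarith).ne'
      have hA1 : A + 1 ≠ 0 := (show (0:ℝ) < A + 1 by linarith).ne'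
      have hA2 : A + 2 ≠ 0 := (show (0:ℝ) < A + 2 by linarith).ne'
      field_simp
      ring
    rw [heq]
    apply div_nonneg _ (by positivity)
    apply mul_nonneg (by linarith) (mul_nonneg (by linarith) (by linarith))
  have hgp : 0 ≤ cc ^ 2 * (1 - d) - μ * e := by
    have heq : cc ^ 2 * (1 - d) - μ * e
        = m * (-β * (2 * m + 1 + α + β))
          / ((2 * m + α + β + 1) ^ 2 * (2 * m + 2 + α + β)) := by
      rw [hμ_def, he_def, hcc_def, hd_def]
      obtain ⟨A, rfl⟩ : ∃ A, α = A - 2 * m - β := ⟨α + 2 * m + β, by ring⟩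
      rw [show 2 * m + (A - 2 * m - β) + β = A by ring,
        show 2 * m + 2 + (A - 2 * m - β) + β = A + 2 by ring]
      have hA0 : A ≠ 0 := (show (0:ℝ) < A by linarith).ne'
      have hA1 : A + 1 ≠ 0 := (show (0:ℝ) < A + 1 by linarith).ne'
      have hA2 : A + 2 ≠ 0 := (show (0:ℝ) < A + 2 by linarith).ne'
      field_simp
      ring
    rw [heq]
    apply div_nonneg _ (by positivity)
    apply mul_nonneg (by linarith) (mul_nonneg (by linarith) (by linarith))
  have hV : e * p ^ 2 - x * p * q + (1 - e) * q ^ 2 = e * (p ^ 2 - q * o) := by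
    linear_combination (-q) * hrecm1
  have hMV : 0 ≤ μ * (e * p ^ 2 - x * p * q + (1 - e) * q ^ 2) := by
    rw [hV]; exact mul_nonneg hμ (mul_nonneg he hΔ)
  exact genCheb_turan_step e cc d μ x p q r s h1 h2 hcons ha hb hgq hgp hMV hx2

/-- The even-index induction step with explicit coefficients. -/
lemma genCheb_step_even (α β : ℝ) (hα : -1 < α) (hβ : -1 < β) (hβ0 : β ≤ 0)
    (m : ℝ) (hm : 1 ≤ m) (x p q r s o : ℝ)
    (hrecm1 : x * p = (1 - m / (2 * m + α + β + 1)) * q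
        + m / (2 * m + α + β + 1) * o)
    (h1 : x * q = (1 - (m + 1 + β) / (2 * m + 2 + α + β)) * r
        + (m + 1 + β) / (2 * m + 2 + α + β) * p)
    (h2 : x * r = (1 - (m + 1) / (2 * m + 2 + α + β + 1)) * s
        + (m + 1) / (2 * m + 2 + α + β + 1) * q)
    (hΔ : 0 ≤ p ^ 2 - q * o) (hx2 : x ^ 2 ≤ 1) :
    0 ≤ r ^ 2 - s * q := by
  have hL1 : (0:ℝ) < 2 * m + α + β + 1 := by linarith
  have hL : (0:ℝ) < 2 * m + 2 + α + β := by linarith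
  have hL2 : (0:ℝ) < 2 * m + 2 + α + β + 1 := by linarith
  set e := m / (2 * m + α + β + 1) with he_def
  set cc := (m + 1 + β) / (2 * m + 2 + α + β) with hcc_def
  set d := (m + 1) / (2 * m + 2 + α + β + 1) with hd_def
  set μ := (m + 1 + β) / (2 * m + 2 + α + β)
      * (1 - (m + 1 + β) / (2 * m + 2 + α + β))
      * ((2 * m + α + β + 1) / (2 * m + 2 + α + β + 1)) with hμ_def
  have ha : 0 < 1 - cc := by
    rw [hcc_def, sub_pos, div_lt_one hL]; linarith
  have hb : 0 < 1 - d := by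
    rw [hd_def, sub_pos, div_lt_one hL2]; linarith
  have he : 0 ≤ e := div_nonneg (by linarith) hL1.le
  have hcc0 : 0 ≤ cc := div_nonneg (by linarith) hL.le
  have hμ : 0 ≤ μ := by
    rw [hμ_def]
    exact mul_nonneg (mul_nonneg hcc0 (by rw [hcc_def] at ha; linarith))
      (div_nonneg hL1.le hL2.le)
  have hcons : μ * (1 - 2 * e) = cc * (1 - cc) * (1 - 2 * d) := by
    rw [hμ_def, he_def, hcc_def, hd_def]
    obtain ⟨A, rfl⟩ : ∃ A, α = A - 2 * m - β - 1 := ⟨α + 2 * m + β + 1, by ring⟩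
    rw [show 2 * m + 2 + (A - 2 * m - β - 1) + β + 1 = A + 2 by ring,
      show 2 * m + 2 + (A - 2 * m - β - 1) + β = A + 1 by ring,
      show 2 * m + (A - 2 * m - β - 1) + β + 1 = A by ring]
    have hA0 : A ≠ 0 := (show (0:ℝ) < A by linarith).ne'
    have hA1 : A + 1 ≠ 0 := (show (0:ℝ) < A + 1 by linarith).ne'
    have hA2 : A + 2 ≠ 0 := (show (0:ℝ) < A + 2 by linarith).ne'
    field_simp
    ring
  have hgq : 0 ≤ d * (1 - cc) ^ 2 - μ * (1 - e) := by
    have heq : d * (1 - cc) ^ 2 - μ * (1 - e)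
        = (m + 1 + α) * (-β)
          / ((2 * m + 2 + α + β) * (2 * m + 2 + α + β + 1)) := by
      rw [hμ_def, he_def, hcc_def, hd_def]
      obtain ⟨A, rfl⟩ : ∃ A, α = A - 2 * m - β - 1 := ⟨α + 2 * m + β + 1, by ring⟩
      rw [show 2 * m + 2 + (A - 2 * m - β - 1) + β + 1 = A + 2 by ring,
        show 2 * m + 2 + (A - 2 * m - β - 1) + β = A + 1 by ring,
        show 2 * m + (A - 2 * m - β - 1) + β + 1 = A by ring]
      have hA0 : A ≠ 0 := (show (0:ℝ) < A by linarith).ne'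
      have hA1 : A + 1 ≠ 0 := (show (0:ℝ) < A + 1 by linarith).ne'
      have hA2 : A + 2 ≠ 0 := (show (0:ℝ) < A + 2 by linarith).ne'
      field_simp
      ring
    rw [heq]
    apply div_nonneg _ (by positivity)
    apply mul_nonneg (by linarith) (by linarith)
  have hgp : 0 ≤ cc ^ 2 * (1 - d) - μ * e := by
    have heq : cc ^ 2 * (1 - d) - μ * e
        = (m + 1 + β) * (1 + β)
          / ((2 * m + 2 + α + β) * (2 * m + 2 + α + β + 1)) := by
      rw [hμ_def, he_def, hcc_def, hd_def]
      obtain ⟨A, rfl⟩ : ∃ A, α = A - 2 * m - β - 1 := ⟨α + 2 * m + β + 1, by ring⟩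
      rw [show 2 * m + 2 + (A - 2 * m - β - 1) + β + 1 = A + 2 by ring,
        show 2 * m + 2 + (A - 2 * m - β - 1) + β = A + 1 by ring,
        show 2 * m + (A - 2 * m - β - 1) + β + 1 = A by ring]
      have hA0 : A ≠ 0 := (show (0:ℝ) < A by linarith).ne'
      have hA1 : A + 1 ≠ 0 := (show (0:ℝ) < A + 1 by linarith).ne'
      have hA2 : A + 2 ≠ 0 := (show (0:ℝ) < A + 2 by linarith).ne'
      field_simp
      ring
    rw [heq]
    apply div_nonneg _ (by positivity)
    apply mul_nonneg (by linarith) (by linarith)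
  have hV : e * p ^ 2 - x * p * q + (1 - e) * q ^ 2 = e * (p ^ 2 - q * o) := by
    linear_combination (-q) * hrecm1
  have hMV : 0 ≤ μ * (e * p ^ 2 - x * p * q + (1 - e) * q ^ 2) := by
    rw [hV]; exact mul_nonneg hμ (mul_nonneg he hΔ)
  exact genCheb_turan_step e cc d μ x p q r s h1 h2 hcons ha hb hgq hgp hMV hx2

set_option maxHeartbeats 1000000 in
/-- Theorem 3.1: the generalized Chebyshev polynomials `T_n^{(α,β)}` with
`α, β > -1` satisfy Turán's inequality on `[-1,1]` if and only if `β ≤ 0`. -/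
theorem genCheb_turan_iff
    (α β : ℝ) (hα : -1 < α) (hβ : -1 < β)
    (c : ℕ → ℝ) (hc0 : c 0 = 0)
    (hodd : ∀ n : ℕ, 1 ≤ n → c (2 * n - 1) = ((n : ℝ) + β) / (2 * (n : ℝ) + α + β))
    (heven : ∀ n : ℕ, 1 ≤ n → c (2 * n) = (n : ℝ) / (2 * (n : ℝ) + α + β + 1))
    (P : ℕ → ℝ → ℝ) (hP0 : ∀ x, P 0 x = 1)
    (hrec : ∀ n x, x * P n x = (1 - c n) * P (n + 1) x + c n * P (n - 1) x) :
    (∀ n, 1 ≤ n → ∀ x ∈ Set.Icc (-1 : ℝ) 1,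
      0 ≤ P n x ^ 2 - P (n + 1) x * P (n - 1) x) ↔ β ≤ 0 := by
  have hD2 : (0:ℝ) < 2 + α + β := by linarith
  have hD3 : (0:ℝ) < 3 + α + β := by linarith
  have hc1 : c 1 = (1 + β) / (2 + α + β) := by
    have h := hodd 1 le_rfl
    norm_num at h
    rw [h]
  have hc2 : c 2 = 1 / (3 + α + β) := by
    have h := heven 1 le_rfl
    norm_num at h
    rw [h, show (2 + α + β + 1 : ℝ) = 3 + α + β from by ring]
    exact (one_div _).symm
  have hP1 : ∀ x, P 1 x = x := by
    intro x
    have h := hrec 0 x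
    rw [hc0, hP0] at h
    norm_num at h
    linarith [h]
  constructor
  · -- necessity
    intro H
    by_contra hb0
    push_neg at hb0
    set c1 := (1 + β) / (2 + α + β) with hc1def
    set c2 := (1:ℝ) / (3 + α + β) with hc2def
    have hc1pos : 0 < c1 := div_pos (by linarith) hD2
    have ha : 0 < 1 - c1 := by
      rw [hc1def, sub_pos, div_lt_one hD2]; linarith
    have hbb : 0 < 1 - c2 := by
      rw [hc2def, sub_pos, div_lt_one hD3]; linarith
    set μ := c1 * (1 - c1) * (1 - 2 * c2) with hμdef
    set gq := c2 * (1 - c1) ^ 2 - μ * (1 - 0) with hgqdef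
    set gp := c1 ^ 2 * (1 - c2) - μ * 0 with hgpdef
    have hgq_eq : gq = -((1 + α) * β) / ((2 + α + β) * (3 + α + β)) := by
      rw [hgqdef, hμdef, hc1def, hc2def]
      field_simp
      ring
    have hgqneg : gq < 0 := by
      rw [hgq_eq]
      apply div_neg_of_neg_of_pos _ (by positivity)
      nlinarith
    have hgppos : 0 < gp := by
      rw [hgpdef]
      nlinarith [mul_pos (mul_pos hc1pos hc1pos) hbb]
    have hgpgq : 0 < gp - gq := by linarith
    set t0 := (gp / (gp - gq) + 1) / 2 with ht0def
    have ht0pos : 0 < t0 := by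
      have := div_pos hgppos hgpgq
      rw [ht0def]; linarith
    have ht0lt1 : t0 < 1 := by
      have : gp / (gp - gq) < 1 := by
        rw [div_lt_one hgpgq]; linarith
      rw [ht0def]; linarith
    have hcrit : gq * t0 + gp * (1 - t0) < 0 := by
      have h1 : t0 * (gp - gq) = gp - gq / 2 := by
        rw [ht0def]
        field_simp
        ring
      nlinarith [h1, hgqneg]
    set x0 := Real.sqrt t0 with hx0def
    have hx0sq : x0 ^ 2 = t0 := Real.sq_sqrt ht0pos.le
    have hx0mem : x0 ∈ Set.Icc (-1:ℝ) 1 := by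
      constructor
      · linarith [Real.sqrt_nonneg t0]
      · exact Real.sqrt_le_one.mpr ht0lt1.le
    have h1 : x0 * x0 = (1 - c1) * P 2 x0 + c1 * 1 := by
      have h := hrec 1 x0
      rw [show (1:ℕ) - 1 = 0 from rfl, show (1:ℕ) + 1 = 2 from rfl,
        hc1, hP1, hP0] at h
      exact h
    have h2 : x0 * P 2 x0 = (1 - c2) * P 3 x0 + c2 * x0 := by
      have h := hrec 2 x0
      rw [show (2:ℕ) - 1 = 1 from rfl, show (2:ℕ) + 1 = 3 from rfl,
        hc2, hP1] at h
      exact h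
    have hcons : μ * (1 - 2 * 0) = c1 * (1 - c1) * (1 - 2 * c2) := by
      rw [hμdef]; ring
    have key := genCheb_turan_key 0 c1 c2 μ x0 1 x0 (P 2 x0) (P 3 x0) h1 h2 hcons
    rw [← hgqdef, ← hgpdef] at key
    have hH := H 2 (by norm_num) x0 hx0mem
    rw [show (2:ℕ) - 1 = 1 from rfl, show (2:ℕ) + 1 = 3 from rfl, hP1] at hH
    have hx0x0 : x0 * x0 = t0 := by rw [← hx0sq]; ring
    have hstep1 : μ * ((0:ℝ) * 1 ^ 2 - x0 * 1 * x0 + (1 - 0) * x0 ^ 2) = 0 := by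
      ring
    have hterm2 : gq * (1 - x0 ^ 2) * x0 ^ 2 = gq * (1 - t0) * t0 := by
      rw [hx0sq]
    have hterm3 : gp * ((1:ℝ) - x0 * x0) ^ 2 = gp * (1 - t0) ^ 2 := by
      rw [hx0x0]
    have hneg : gq * (1 - t0) * t0 + gp * (1 - t0) ^ 2 < 0 := by
      have hprod : (1 - t0) * (gq * t0 + gp * (1 - t0)) < 0 :=
        mul_neg_of_pos_of_neg (by linarith) hcrit
      nlinarith [hprod]
    have hKpos : (0:ℝ) < (1 - c1) ^ 2 * (1 - c2) := by positivity
    have hL : 0 ≤ (1 - c1) ^ 2 * (1 - c2) * (P 2 x0 ^ 2 - P 3 x0 * x0) :=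
      mul_nonneg hKpos.le hH
    rw [key] at hL
    linarith [hstep1, hterm2, hterm3, hneg]
  · -- sufficiency
    intro hβ0
    have main : ∀ k : ℕ, ∀ x ∈ Set.Icc (-1:ℝ) 1,
        (0 ≤ P (k+1) x ^ 2 - P (k+2) x * P k x) ∧
        (0 ≤ P (k+2) x ^ 2 - P (k+3) x * P (k+1) x) := by
      intro k
      induction k with
      | zero =>
        intro x hx
        obtain ⟨hxl, hxr⟩ := hx
        have hx2 : x ^ 2 ≤ 1 := by nlinarith
        have hc1pos : 0 ≤ (1 + β) / (2 + α + β) := div_nonneg (by linarith) hD2.le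
        have ha : 0 < 1 - (1 + β) / (2 + α + β) := by
          rw [sub_pos, div_lt_one hD2]; linarith
        constructor
        · -- Δ₁ ≥ 0
          have h := hrec 1 x
          rw [show (1:ℕ) - 1 = 0 from rfl, show (1:ℕ) + 1 = 2 from rfl,
            hc1, hP1, hP0] at h
          show 0 ≤ P 1 x ^ 2 - P 2 x * P 0 x
          rw [hP1, hP0]
          nlinarith [h, ha, mul_nonneg hc1pos (by nlinarith : (0:ℝ) ≤ 1 - x ^ 2)]
        · -- Δ₂ ≥ 0
          have hbb : 0 < 1 - (1:ℝ) / (3 + α + β) := by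
            rw [sub_pos, div_lt_one hD3]; linarith
          have h1 : x * P 1 x = (1 - (1 + β) / (2 + α + β)) * P 2 x
              + (1 + β) / (2 + α + β) * P 0 x := by
            have h := hrec 1 x
            rw [show (1:ℕ) - 1 = 0 from rfl, show (1:ℕ) + 1 = 2 from rfl,
              hc1] at h
            exact h
          have h2 : x * P 2 x = (1 - 1 / (3 + α + β)) * P 3 x
              + 1 / (3 + α + β) * P 1 x := by
            have h := hrec 2 x
            rw [show (2:ℕ) - 1 = 1 from rfl, show (2:ℕ) + 1 = 3 from rfl,
              hc2] at h
            exact h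
          set c1 := (1 + β) / (2 + α + β) with hc1def
          set c2 := (1:ℝ) / (3 + α + β) with hc2def
          set μ := c1 * (1 - c1) * (1 - 2 * c2) with hμdef
          have hcons : μ * (1 - 2 * 0) = c1 * (1 - c1) * (1 - 2 * c2) := by
            rw [hμdef]; ring
          have hgq : 0 ≤ c2 * (1 - c1) ^ 2 - μ * (1 - 0) := by
            have heq : c2 * (1 - c1) ^ 2 - μ * (1 - 0)
                = (1 + α) * (-β) / ((2 + α + β) * (3 + α + β)) := by
              rw [hμdef, hc1def, hc2def]
              field_simp
              ring
            rw [heq]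
            apply div_nonneg _ (by positivity)
            apply mul_nonneg (by linarith) (by linarith)
          have hgp : 0 ≤ c1 ^ 2 * (1 - c2) - μ * 0 := by
            have : 0 ≤ c1 ^ 2 * (1 - c2) := mul_nonneg (sq_nonneg _) hbb.le
            linarith
          have hMV : 0 ≤ μ * ((0:ℝ) * P 0 x ^ 2 - x * P 0 x * P 1 x
              + (1 - 0) * P 1 x ^ 2) := by
            have : (0:ℝ) * P 0 x ^ 2 - x * P 0 x * P 1 x + (1 - 0) * P 1 x ^ 2 = 0 := by
              rw [hP0, hP1]; ring
            rw [this, mul_zero]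
          exact genCheb_turan_step 0 c1 c2 μ x (P 0 x) (P 1 x) (P 2 x) (P 3 x)
            h1 h2 hcons ha hbb hgq hgp hMV hx2
      | succ k ih =>
        intro x hx
        obtain ⟨ih1, ih2⟩ := ih x hx
        obtain ⟨hxl, hxr⟩ := hx
        have hx2 : x ^ 2 ≤ 1 := by nlinarith
        refine ⟨by
          convert ih2 using 3, ?_⟩
        show 0 ≤ P (k+3) x ^ 2 - P (k+4) x * P (k+2) x
        rcases Nat.even_or_odd k with ⟨j, hj⟩ | ⟨j, hj⟩
        · -- k = j + j, so k+2 = 2(j+1): odd-type step, m = j+1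
          have hm : (1:ℝ) ≤ (j:ℝ) + 1 := by
            have h0 : (0:ℝ) ≤ (j:ℝ) := Nat.cast_nonneg j
            linarith
          have he1 : c (k+1) = ((j:ℝ) + 1 + β) / (2 * ((j:ℝ) + 1) + α + β) := by
            have h := hodd (j+1) (by omega)
            rw [show 2 * (j+1) - 1 = k+1 by omega] at h
            rw [h]; push_cast; ring_nf
          have he2 : c (k+2) = ((j:ℝ) + 1) / (2 * ((j:ℝ) + 1) + α + β + 1) := by
            have h := heven (j+1) (by omega)
            rw [show 2 * (j+1) = k+2 by omega] at h
            rw [h]; push_cast; ring_nf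
          have he3 : c (k+3) = ((j:ℝ) + 1 + 1 + β) / (2 * ((j:ℝ) + 1) + 2 + α + β) := by
            have h := hodd (j+2) (by omega)
            rw [show 2 * (j+2) - 1 = k+3 by omega] at h
            rw [h]; push_cast; ring_nf
          have hrecm1 := hrec (k+1) x
          rw [he1, show k+1+1 = k+2 by omega, show k+1-1 = k by omega] at hrecm1
          have h1 := hrec (k+2) x
          rw [he2, show k+2+1 = k+3 by omega, show k+2-1 = k+1 by omega] at h1
          have h2 := hrec (k+3) x
          rw [he3, show k+3+1 = k+4 by omega, show k+3-1 = k+2 by omega] at h2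
          have hΔ : 0 ≤ P (k+1) x ^ 2 - P (k+2) x * P k x := ih1
          refine genCheb_step_odd α β hα hβ hβ0 ((j:ℝ)+1) hm x
            (P (k+1) x) (P (k+2) x) (P (k+3) x) (P (k+4) x) (P k x)
            ?_ ?_ ?_ hΔ hx2
          · convert hrecm1 using 4
          · convert h1 using 4
          · convert h2 using 4
        · -- k = 2j+1, so k+2 = 2(j+1)+1: even-type step, m = j+1
          have hm : (1:ℝ) ≤ (j:ℝ) + 1 := by
            have h0 : (0:ℝ) ≤ (j:ℝ) := Nat.cast_nonneg j
            linarith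
          have he1 : c (k+1) = ((j:ℝ) + 1) / (2 * ((j:ℝ) + 1) + α + β + 1) := by
            have h := heven (j+1) (by omega)
            rw [show 2 * (j+1) = k+1 by omega] at h
            rw [h]; push_cast; ring_nf
          have he2 : c (k+2) = ((j:ℝ) + 1 + 1 + β) / (2 * ((j:ℝ) + 1) + 2 + α + β) := by
            have h := hodd (j+2) (by omega)
            rw [show 2 * (j+2) - 1 = k+2 by omega] at h
            rw [h]; push_cast; ring_nf
          have he3 : c (k+3) = ((j:ℝ) + 1 + 1) / (2 * ((j:ℝ) + 1) + 2 + α + β + 1) := by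
            have h := heven (j+2) (by omega)
            rw [show 2 * (j+2) = k+3 by omega] at h
            rw [h]; push_cast; ring_nf
          have hrecm1 := hrec (k+1) x
          rw [he1, show k+1+1 = k+2 by omega, show k+1-1 = k by omega] at hrecm1
          have h1 := hrec (k+2) x
          rw [he2, show k+2+1 = k+3 by omega, show k+2-1 = k+1 by omega] at h1
          have h2 := hrec (k+3) x
          rw [he3, show k+3+1 = k+4 by omega, show k+3-1 = k+2 by omega] at h2
          have hΔ : 0 ≤ P (k+1) x ^ 2 - P (k+2) x * P k x := ih1
          refine genCheb_step_even α β hα hβ hβ0 ((j:ℝ)+1) hm x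
            (P (k+1) x) (P (k+2) x) (P (k+3) x) (P (k+4) x) (P k x)
            ?_ ?_ ?_ hΔ hx2
          · convert hrecm1 using 4
          · convert h1 using 4
          · convert h2 using 4
    intro n hn x hx
    obtain ⟨k, rfl⟩ : ∃ k, n = k + 1 := ⟨n - 1, by omega⟩
    have := (main k x hx).1
    convert this using 3
    simp
end
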